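/- arXiv:1908.06873 — 12 statements merged into one kernel-verified Lean document; each statement's English description precedes it below -/
import Mathlib

section
/- Let A be a real n×n matrix. A is normally elliptic if and only if for every symmetric positive definite matrix G ∈ ℝ^{n×n} there exists a symmetric positive definite matrix H ∈ ℝ^{n×n} such that H·A + Aᵀ·H = G. -/
/-!
If `H * A + Aᵀ * H = G` with `H` and `G` positive definite and `A v = μ v` for a complex
`v ≠ 0`, then `v* G v = 2 Re μ · v* H v`, so `Re μ > 0`.

Conversely, if every eigenvalue of `A` has positive real part, the spectra of `A` and `-Aᵀ`
are disjoint, so the Lyapunov operator `H ↦ H * A + Aᵀ * H` is injective (Sylvester), hence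
invertible; it commutes with transposition, so it solves a symmetric `G` by a symmetric `H`.
The matrices `Aₛ = (1 - s) • 1 + s • A`, `s ∈ [0, 1]`, are all normally elliptic, so the
solutions `Hₛ` of `Hₛ * Aₛ + Aₛᵀ * Hₛ = G` depend continuously on `s`. They are nonsingular,
since `Hₛ v = 0` forces `vᵀ G v = 0`, and a continuous path of nonsingular symmetric matrices
starting at the positive definite `H₀ = G / 2` stays positive definite.
-/

open Matrix

/-- A real square matrix is *normally elliptic* if every eigenvalue
(i.e. every element of the spectrum of the associated complex matrix)
has positive real part. -/
def NormallyElliptic {n : ℕ} (A : Matrix (Fin n) (Fin n) ℝ) : Prop :=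
  ∀ μ ∈ spectrum ℂ (A.map Complex.ofReal), 0 < μ.re

/-- A (possibly nonsymmetric) real matrix is positive definite if `zᵀ M z > 0`
for all nonzero `z ∈ ℝⁿ`. -/
def PosDefMat {n : ℕ} (M : Matrix (Fin n) (Fin n) ℝ) : Prop :=
  ∀ z : Fin n → ℝ, z ≠ 0 → 0 < z ⬝ᵥ M.mulVec z

open Polynomial Topology Filter Kronecker ComplexOrder unitInterval

theorem SemiconjBy.aeval {K R : Type*} [CommSemiring K] [Semiring R] [Algebra K R]
    {a x y : R} (h : SemiconjBy a x y) (p : K[X]) :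
    SemiconjBy a (aeval x p) (aeval y p) := by
  induction p using Polynomial.induction_on' with
  | add p q hp hq => simpa only [map_add] using hp.add_right hq
  | monomial k c =>
    simp only [aeval_monomial]
    exact SemiconjBy.mul_right (Algebra.commutes c a).symm (h.pow_right k)

namespace Matrix

section Spectrum

variable {ι K : Type*} [Fintype ι] [DecidableEq ι] [Field K]

theorem spectrum_transpose (M : Matrix ι ι K) : spectrum K Mᵀ = spectrum K M := by
  ext μ
  simp only [mem_spectrum_iff_isRoot_charpoly, charpoly_transpose]

theorem exists_mulVec_eq_smul_of_mem_spectrum {M : Matrix ι ι K} {μ : K}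
    (hμ : μ ∈ spectrum K M) : ∃ v ≠ 0, M *ᵥ v = μ • v := by
  rw [← spectrum_toLin', ← Module.End.hasEigenvalue_iff_mem_spectrum] at hμ
  obtain ⟨v, hv⟩ := hμ.exists_hasEigenvector
  exact ⟨v, hv.2, by simpa using hv.apply_eq_smul⟩

/-- Sylvester's theorem. -/
theorem eq_zero_of_mul_eq_mul_of_disjoint_spectrum [IsAlgClosed K] {A B X : Matrix ι ι K}
    (hAB : Disjoint (spectrum K A) (spectrum K B)) (h : X * A = B * X) : X = 0 := by
  cases isEmpty_or_nonempty ι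
  · exact Subsingleton.elim _ _
  have hX : 0 = aeval B A.charpoly * X := by
    simpa [aeval_self_charpoly] using (SemiconjBy.aeval h A.charpoly).eq
  have hdeg : 0 < A.charpoly.degree := by
    rw [charpoly_degree_eq_dim]
    exact_mod_cast Fintype.card_pos
  have hunit : IsUnit (aeval B A.charpoly) := by
    rw [← spectrum.zero_notMem_iff K, spectrum.map_polynomial_aeval_of_degree_pos B _ hdeg]
    rintro ⟨μ, hμB, hμA⟩
    exact hAB.notMem_of_mem_right hμB (mem_spectrum_iff_isRoot_charpoly.mpr hμA)
  exact hunit.mul_right_eq_zero.mp hX.symm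

end Spectrum

section Lyapunov

variable {ι : Type*}

theorem isSymm_of_lyapunov_eq {R : Type*} [Fintype ι] [CommRing R] {A G H : Matrix ι ι R}
    (hA : ∀ X : Matrix ι ι R, X * A + Aᵀ * X = 0 → X = 0) (hG : G.IsSymm)
    (hH : H * A + Aᵀ * H = G) : H.IsSymm := by
  have hHt : Hᵀ * A + Aᵀ * Hᵀ = G := by
    rw [← hG.eq, ← hH, transpose_add, transpose_mul, transpose_mul, transpose_transpose, add_comm]
  refine sub_eq_zero.mp (hA _ ?_)
  rw [sub_mul, mul_sub, sub_add_sub_comm, hH, hHt, sub_self]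

variable [DecidableEq ι]

/-- The matrix of `X ↦ X * A + Aᵀ * X` acting on `vec X`. -/
def lyapunovMatrix {R : Type*} [CommRing R] (A : Matrix ι ι R) : Matrix (ι × ι) (ι × ι) R :=
  Aᵀ ⊗ₖ 1 + 1 ⊗ₖ Aᵀ

theorem continuous_lyapunovMatrix {R : Type*} [CommRing R] [TopologicalSpace R]
    [IsTopologicalRing R] : Continuous (lyapunovMatrix : Matrix ι ι R → _) :=
  continuous_matrix fun _ _ => by
    simp only [lyapunovMatrix, add_apply, kroneckerMap_apply, transpose_apply]
    fun_prop

variable [Fintype ι]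

theorem lyapunovMatrix_mulVec_vec {R : Type*} [CommRing R] (A X : Matrix ι ι R) :
    lyapunovMatrix A *ᵥ vec X = vec (X * A + Aᵀ * X) := by
  rw [lyapunovMatrix, add_mulVec, kronecker_mulVec_vec, ← vec_mul_eq_mulVec, transpose_transpose,
    Matrix.one_mul, vec_add]

variable {K : Type*} [Field K]

theorem det_lyapunovMatrix_ne_zero {A : Matrix ι ι K}
    (hA : ∀ X : Matrix ι ι K, X * A + Aᵀ * X = 0 → X = 0) : (lyapunovMatrix A).det ≠ 0 := by
  rw [Ne, ← exists_mulVec_eq_zero_iff]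
  rintro ⟨v, hv, hAv⟩
  have hvX : vec (of fun i j => v (j, i)) = v := rfl
  rw [← hvX, lyapunovMatrix_mulVec_vec, vec_eq_zero_iff] at hAv
  exact hv (by rw [← hvX, hA _ hAv, vec_zero])

/-- `of fun i j => v (j, i)` inverts `vec`, which stacks the columns of a matrix. -/
noncomputable def lyapunovSolution (A G : Matrix ι ι K) : Matrix ι ι K :=
  of fun i j => ((lyapunovMatrix A)⁻¹ *ᵥ vec G) (j, i)

theorem lyapunovSolution_mul_add {A : Matrix ι ι K} (hA : (lyapunovMatrix A).det ≠ 0)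
    (G : Matrix ι ι K) : lyapunovSolution A G * A + Aᵀ * lyapunovSolution A G = G := by
  rw [← vec_inj, ← lyapunovMatrix_mulVec_vec]
  change lyapunovMatrix A *ᵥ ((lyapunovMatrix A)⁻¹ *ᵥ vec G) = vec G
  rw [mulVec_mulVec, mul_nonsing_inv _ hA.isUnit, one_mulVec]

theorem continuousAt_lyapunovSolution [TopologicalSpace K] [IsTopologicalDivisionRing K]
    {X : Type*} [TopologicalSpace X] {A : X → Matrix ι ι K} (hA : Continuous A) {x : X}
    (hx : (lyapunovMatrix (A x)).det ≠ 0) (G : Matrix ι ι K) :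
    ContinuousAt (fun x => lyapunovSolution (A x) G) x := by
  have hinv : ContinuousAt Inv.inv (lyapunovMatrix (A x)) :=
    continuousAt_matrix_inv _ (by rw [Ring.inverse_eq_inv']; exact continuousAt_inv₀ hx)
  have hsolve : Continuous fun M : Matrix (ι × ι) (ι × ι) K => of fun i j => (M *ᵥ vec G) (j, i) :=
    continuous_matrix fun i j => (continuous_apply (j, i)).comp
      (continuous_id.matrix_mulVec continuous_const)
  exact hsolve.continuousAt.comp (hinv.comp (f := fun x => lyapunovMatrix (A x))
    (continuous_lyapunovMatrix.comp hA).continuousAt)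

theorem det_ne_zero_of_lyapunov_eq [PartialOrder K] [StarRing K] [TrivialStar K]
    {A G H : Matrix ι ι K} (hH : H.IsSymm) (hG : G.PosDef) (h : H * A + Aᵀ * H = G) :
    H.det ≠ 0 := by
  rw [Ne, ← exists_mulVec_eq_zero_iff]
  rintro ⟨v, hv, hHv⟩
  have hvH : v ᵥ* H = 0 := by rw [← hH.eq, vecMul_transpose, hHv]
  have hGv := hG.dotProduct_mulVec_pos hv
  rw [star_trivial, ← h, add_mulVec, ← mulVec_mulVec, ← mulVec_mulVec, hHv, mulVec_zero,
    dotProduct_add, dotProduct_mulVec, hvH, zero_dotProduct, dotProduct_zero, add_zero] at hGv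
  exact lt_irrefl _ hGv

end Lyapunov

section PosDef

variable {ι : Type*} [Fintype ι]

theorem isClosed_setOf_posSemidef : IsClosed {M : Matrix ι ι ℝ | M.PosSemidef} := by
  simp only [posSemidef_iff_dotProduct_mulVec, Set.ofPred_and, Set.ofPred_forall]
  refine (isClosed_eq continuous_id.matrix_conjTranspose continuous_id).inter
    (isClosed_iInter fun x => isClosed_le continuous_const ?_)
  fun_prop

theorem PosDef.eventually_nhds {M : Matrix ι ι ℝ} (hM : M.PosDef) :
    ∀ᶠ N in 𝓝 M, N.IsHermitian → N.PosDef := by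
  have hsphere : ∀ᶠ N in 𝓝 M, ∀ z ∈ Metric.sphere (0 : ι → ℝ) 1, 0 < z ⬝ᵥ N *ᵥ z := by
    refine (isCompact_sphere 0 1).eventually_forall_of_forall_eventually fun z hz => ?_
    refine ContinuousAt.eventually_lt continuousAt_const (by fun_prop) ?_
    simpa using hM.dotProduct_mulVec_pos (ne_zero_of_mem_unit_sphere ⟨z, hz⟩)
  filter_upwards [hsphere] with N hN hNherm
  refine .of_dotProduct_mulVec_pos hNherm fun z hz => ?_
  have hnorm : 0 < ‖z‖ := norm_pos_iff.mpr hz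
  have hu := hN (‖z‖⁻¹ • z) (by simp [norm_smul, hnorm.ne'])
  rw [mulVec_smul, dotProduct_smul, smul_dotProduct, smul_eq_mul, smul_eq_mul] at hu
  simpa using pos_of_mul_pos_right (pos_of_mul_pos_right hu (by positivity)) (by positivity)

theorem PosDef.map_ofReal {H : Matrix ι ι ℝ} (hH : H.PosDef) : (H.map Complex.ofReal).PosDef := by
  have hherm := hH.isHermitian.map Complex.ofReal fun r => (Complex.conj_ofReal r).symm
  refine .of_dotProduct_mulVec_pos hherm fun v hv => ?_
  set x : ι → ℝ := fun i => (v i).re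
  set y : ι → ℝ := fun i => (v i).im
  have hre : (star v ⬝ᵥ H.map Complex.ofReal *ᵥ v).re = x ⬝ᵥ H *ᵥ x + y ⬝ᵥ H *ᵥ y := by
    simp [x, y, dotProduct, mulVec, Complex.re_sum, Complex.mul_re, Finset.mul_sum,
      ← Finset.sum_add_distrib]
  have hxy : x ≠ 0 ∨ y ≠ 0 := by
    by_contra! h
    exact hv (funext fun i => Complex.ext (congrFun h.1 i) (congrFun h.2 i))
  have hx := hH.posSemidef.dotProduct_mulVec_nonneg x
  have hy := hH.posSemidef.dotProduct_mulVec_nonneg y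
  refine Complex.pos_iff.mpr ⟨?_, (hherm.im_star_dotProduct_mulVec_self v).symm⟩
  rw [hre]
  rcases hxy with hx' | hy'
  · exact add_pos_of_pos_of_nonneg (by simpa using hH.dotProduct_mulVec_pos hx') (by simpa using hy)
  · exact add_pos_of_nonneg_of_pos (by simpa using hx) (by simpa using hH.dotProduct_mulVec_pos hy')

variable [DecidableEq ι]

theorem posDef_of_continuous_of_det_ne_zero {X : Type*} [TopologicalSpace X] [PreconnectedSpace X]
    {F : X → Matrix ι ι ℝ} (hF : Continuous F) (hF_herm : ∀ x, (F x).IsHermitian)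
    (hF_det : ∀ x, (F x).det ≠ 0) {x₀ : X} (h₀ : (F x₀).PosDef) (x : X) : (F x).PosDef := by
  have hclosed : IsClosed {x | (F x).PosDef} := by
    convert isClosed_setOf_posSemidef.preimage hF using 1
    ext x
    exact ⟨PosDef.posSemidef, fun h => h.posDef_iff_det_ne_zero.mpr (hF_det x)⟩
  have hopen : IsOpen {x | (F x).PosDef} := isOpen_iff_mem_nhds.mpr fun x hx =>
    (hF.continuousAt.eventually (PosDef.eventually_nhds hx)).mono fun y hy => hy (hF_herm y)
  exact Set.eq_univ_iff_forall.mp (IsClopen.eq_univ ⟨hclosed, hopen⟩ ⟨x₀, h₀⟩) x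

theorem re_pos_of_mem_spectrum_of_posDef {𝕜 : Type*} [RCLike 𝕜] {B P : Matrix ι ι 𝕜}
    (hP : P.PosDef) (hQ : (P * B + Bᴴ * P).PosDef) {μ : 𝕜} (hμ : μ ∈ spectrum 𝕜 B) :
    0 < RCLike.re μ := by
  obtain ⟨v, hv, hBv⟩ := exists_mulVec_eq_smul_of_mem_spectrum hμ
  have hform : star v ⬝ᵥ (P * B + Bᴴ * P) *ᵥ v = (μ + star μ) * (star v ⬝ᵥ P *ᵥ v) := by
    rw [add_mulVec, ← mulVec_mulVec, ← mulVec_mulVec, dotProduct_add, hBv, mulVec_smul,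
      dotProduct_smul, dotProduct_mulVec (star v) Bᴴ, ← star_mulVec, hBv, star_smul,
      smul_dotProduct, smul_eq_mul, smul_eq_mul, add_mul]
  have hQv := hQ.re_dotProduct_pos hv
  rw [hform, RCLike.star_def, RCLike.add_conj, mul_assoc, ← RCLike.ofReal_ofNat,
    RCLike.re_ofReal_mul, RCLike.re_ofReal_mul] at hQv
  exact pos_of_mul_pos_left (pos_of_mul_pos_right hQv zero_le_two) (hP.re_dotProduct_pos hv).le

end PosDef

end Matrix

theorem posDefMat_iff_posDef {n : ℕ} {M : Matrix (Fin n) (Fin n) ℝ} (hM : M.IsSymm) :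
    PosDefMat M ↔ M.PosDef := by
  simp [PosDefMat, posDef_iff_dotProduct_mulVec, hM]

namespace NormallyElliptic

variable {n : ℕ} {A : Matrix (Fin n) (Fin n) ℝ}

theorem eq_zero_of_lyapunov_eq_zero (hA : NormallyElliptic A) {X : Matrix (Fin n) (Fin n) ℝ}
    (hX : X * A + Aᵀ * X = 0) : X = 0 := by
  have hdisj : Disjoint (spectrum ℂ (A.map Complex.ofReal))
      (spectrum ℂ (-(A.map Complex.ofReal)ᵀ)) := by
    refine Set.disjoint_left.mpr fun μ hμ hμ' => ?_
    rw [← spectrum.neg_eq, Set.mem_neg, spectrum_transpose] at hμ'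
    linarith [hA μ hμ, hA (-μ) hμ', Complex.neg_re μ]
  have hXc : X.map Complex.ofReal * A.map Complex.ofReal =
      -(A.map Complex.ofReal)ᵀ * X.map Complex.ofReal := by
    have := congrArg Complex.ofRealHom.mapMatrix hX
    rw [map_add, map_mul, map_mul, map_zero] at this
    rwa [neg_mul, eq_neg_iff_add_eq_zero, ← transpose_map]
  exact map_injective Complex.ofReal_injective
    ((eq_zero_of_mul_eq_mul_of_disjoint_spectrum hdisj hXc).trans (Matrix.map_zero _ rfl).symm)

theorem one_sub_smul_one_add_smul (hA : NormallyElliptic A) {s : ℝ} (hs : s ∈ I) :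
    NormallyElliptic ((1 - s) • 1 + s • A) := by
  intro μ hμ
  have hmap : ((1 - s) • 1 + s • A).map Complex.ofReal =
      algebraMap ℂ _ (1 - s : ℝ) + (s : ℂ) • A.map Complex.ofReal := by
    ext i j
    rcases eq_or_ne i j with rfl | hij <;> simp [one_apply, algebraMap_matrix_apply, *]
  rw [hmap, ← spectrum.singleton_add_eq, Set.singleton_add] at hμ
  obtain ⟨ν, hν, rfl⟩ := hμ
  rcases hs.1.eq_or_lt with rfl | hs0
  · rw [Complex.ofReal_zero, zero_smul] at hν
    rcases subsingleton_or_nontrivial (Matrix (Fin n) (Fin n) ℂ) with _ | _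
    · simp [spectrum.of_subsingleton] at hν
    · rw [spectrum.zero_eq, Set.mem_singleton_iff] at hν
      simp [hν]
  · have hs0' : (s : ℂ) ≠ 0 := by exact_mod_cast hs0.ne'
    rw [show (s : ℂ) • A.map Complex.ofReal = (Units.mk0 _ hs0' : ℂˣ) • A.map Complex.ofReal
      from rfl, spectrum.unit_smul_eq_smul] at hν
    obtain ⟨ν, hν, rfl⟩ := hν
    show 0 < (((1 - s : ℝ) : ℂ) + (s : ℂ) * ν).re
    rw [Complex.add_re, Complex.ofReal_re, Complex.re_ofReal_mul]
    exact add_pos_of_nonneg_of_pos (sub_nonneg.mpr hs.2) (mul_pos hs0 (hA ν hν))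

theorem exists_posDef_lyapunov (hA : NormallyElliptic A) {G : Matrix (Fin n) (Fin n) ℝ}
    (hG : G.PosDef) : ∃ H : Matrix (Fin n) (Fin n) ℝ, H.PosDef ∧ H * A + Aᵀ * H = G := by
  set A' : ℝ → Matrix (Fin n) (Fin n) ℝ := fun s => (1 - s) • 1 + s • A
  have hA' (s : I) (X : Matrix (Fin n) (Fin n) ℝ) : X * A' s + (A' s)ᵀ * X = 0 → X = 0 :=
    (hA.one_sub_smul_one_add_smul s.2).eq_zero_of_lyapunov_eq_zero
  have hdet (s : I) := det_lyapunovMatrix_ne_zero (hA' s)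
  set H : I → Matrix (Fin n) (Fin n) ℝ := fun s => lyapunovSolution (A' s) G
  have hH (s : I) : H s * A' s + (A' s)ᵀ * H s = G := lyapunovSolution_mul_add (hdet s) G
  have hH_symm (s : I) : (H s).IsSymm :=
    isSymm_of_lyapunov_eq (hA' s) (isHermitian_iff_isSymm.mp hG.isHermitian) (hH s)
  have hH_cont : Continuous H := continuous_iff_continuousAt.mpr fun s =>
    (continuousAt_lyapunovSolution (by fun_prop) (hdet s) G).comp
      continuous_subtype_val.continuousAt
  have hH₀ : (H 0).PosDef := by
    have h₀ : H 0 = (2⁻¹ : ℝ) • G := by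
      rw [← hH 0]
      simp only [A', Set.Icc.coe_zero, sub_zero, one_smul, zero_smul, add_zero, mul_one,
        transpose_one, one_mul]
      module
    exact h₀ ▸ hG.smul (by norm_num)
  refine ⟨H 1, posDef_of_continuous_of_det_ne_zero hH_cont
    (fun s => isHermitian_iff_isSymm.mpr (hH_symm s))
    (fun s => det_ne_zero_of_lyapunov_eq (hH_symm s) hG (hH s)) hH₀ 1, ?_⟩
  simpa [A'] using hH 1

theorem of_posDef_lyapunov {H : Matrix (Fin n) (Fin n) ℝ} (hH : H.PosDef)
    (hG : (H * A + Aᵀ * H).PosDef) : NormallyElliptic A := by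
  have hAc : (A.map Complex.ofReal)ᴴ = Aᵀ.map Complex.ofReal := by
    ext
    simp
  have hmap : H.map Complex.ofReal * A.map Complex.ofReal +
      (A.map Complex.ofReal)ᴴ * H.map Complex.ofReal = (H * A + Aᵀ * H).map Complex.ofReal := by
    ext i j
    simp [hAc, mul_apply]
  exact fun μ => re_pos_of_mem_spectrum_of_posDef hH.map_ofReal (hmap ▸ hG.map_ofReal)

end NormallyElliptic

/-- Lyapunov theorem characterization: `A` is normally elliptic iff for every
symmetric positive definite `G` there is a symmetric positive definite `H` with
`H·A + Aᵀ·H = G`. -/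
theorem normallyElliptic_iff_lyapunov {n : ℕ} (A : Matrix (Fin n) (Fin n) ℝ) :
    NormallyElliptic A ↔
      ∀ G : Matrix (Fin n) (Fin n) ℝ, G.IsSymm → PosDefMat G →
        ∃ H : Matrix (Fin n) (Fin n) ℝ, H.IsSymm ∧ PosDefMat H ∧
          H * A + Aᵀ * H = G := by
  refine ⟨fun hA G hG_symm hG => ?_, fun h => ?_⟩
  · obtain ⟨H, hH, hHA⟩ := hA.exists_posDef_lyapunov ((posDefMat_iff_posDef hG_symm).mp hG)
    have hH_symm := isHermitian_iff_isSymm.mp hH.isHermitian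
    exact ⟨H, hH_symm, (posDefMat_iff_posDef hH_symm).mpr hH, hHA⟩
  · obtain ⟨H, hH_symm, hH, hHA⟩ := h 1 isSymm_one ((posDefMat_iff_posDef isSymm_one).mpr .one)
    exact .of_posDef_lyapunov ((posDefMat_iff_posDef hH_symm).mp hH) (hHA ▸ .one)
end

section
/- Let A be a real n×n matrix. A is diagonalizable over ℝ if and only if there exist a symmetric positive definite matrix A₁ and a symmetric matrix A₂ such that A = A₁·A₂; likewise, A is diagonalizable over ℝ if and only if there exist such matrices with A = A₂·A₁. -/
/-!
If `A = P Λ P⁻¹`, then `A = (P Pᵀ) (P⁻ᵀ Λ P⁻¹)` is a positive definite matrix times a symmetric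
one. Conversely, write the positive definite factor as `S * S` with `S` its symmetric square root:
then `S * S * A₂ = S (S A₂ S) S⁻¹` is similar to a symmetric matrix, hence diagonalizable by the
spectral theorem. Transposition exchanges the order of the two symmetric factors.
-/

open Matrix

/-- `A` is diagonalizable over ℝ. -/
def DiagonalizableR {n : ℕ} (A : Matrix (Fin n) (Fin n) ℝ) : Prop :=
  ∃ P Λ : Matrix (Fin n) (Fin n) ℝ, IsUnit P.det ∧ Λ.IsDiag ∧ A = P * Λ * P⁻¹

namespace Matrix

variable {ι : Type*} [Fintype ι] [DecidableEq ι]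

theorem posDef_mul_transpose_self {P : Matrix ι ι ℝ} (hP : IsUnit P) : (P * Pᵀ).PosDef := by
  simpa using PosDef.mul_conjTranspose_self P (vecMul_injective_iff_isUnit.mpr hP)

open scoped MatrixOrder in
theorem PosDef.exists_isUnit_isSymm_mul_self {M : Matrix ι ι ℝ} (hM : M.PosDef) :
    ∃ S : Matrix ι ι ℝ, IsUnit S ∧ S.IsSymm ∧ S * S = M := by
  have hS : CFC.sqrt M * CFC.sqrt M = M := CFC.sqrt_mul_sqrt_self M hM.posSemidef.nonneg
  refine ⟨CFC.sqrt M, ?_, isHermitian_iff_isSymm.mp (CFC.sqrt_nonneg M).posSemidef.1, hS⟩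
  exact isUnit_of_mul_isUnit_left (hS ▸ hM.isUnit)

end Matrix

section

variable {n : ℕ}

theorem isSymm_and_posDefMat_iff_posDef {M : Matrix (Fin n) (Fin n) ℝ} :
    M.IsSymm ∧ PosDefMat M ↔ M.PosDef := by
  simp [posDef_iff_dotProduct_mulVec, PosDefMat]

theorem DiagonalizableR.conj {S B : Matrix (Fin n) (Fin n) ℝ} (hS : IsUnit S)
    (hB : DiagonalizableR B) : DiagonalizableR (S * B * S⁻¹) := by
  obtain ⟨P, Λ, hP, hΛ, rfl⟩ := hB
  refine ⟨S * P, Λ, by rw [det_mul]; exact ((isUnit_iff_isUnit_det S).mp hS).mul hP, hΛ, ?_⟩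
  simp only [Matrix.mul_inv_rev, Matrix.mul_assoc]

theorem DiagonalizableR.transpose {A : Matrix (Fin n) (Fin n) ℝ} (hA : DiagonalizableR A) :
    DiagonalizableR Aᵀ := by
  obtain ⟨P, Λ, hP, hΛ, rfl⟩ := hA
  refine ⟨P⁻¹ᵀ, Λ, by simpa using isUnit_nonsing_inv_det P hP, hΛ, ?_⟩
  rw [transpose_mul, transpose_mul, hΛ.isSymm.eq, transpose_nonsing_inv,
    nonsing_inv_nonsing_inv _ (by simpa using hP), Matrix.mul_assoc]

theorem diagonalizableR_transpose_iff {A : Matrix (Fin n) (Fin n) ℝ} :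
    DiagonalizableR Aᵀ ↔ DiagonalizableR A :=
  ⟨fun h => transpose_transpose A ▸ h.transpose, DiagonalizableR.transpose⟩

theorem Matrix.IsSymm.diagonalizableR {A : Matrix (Fin n) (Fin n) ℝ} (hA : A.IsSymm) :
    DiagonalizableR A := by
  have hH : A.IsHermitian := isHermitian_iff_isSymm.mpr hA
  set U := hH.eigenvectorUnitary
  refine ⟨U, diagonal (RCLike.ofReal ∘ hH.eigenvalues), UnitaryGroup.det_isUnit U,
    isDiag_diagonal _, ?_⟩
  rw [inv_eq_left_inv (UnitaryGroup.star_mul_self U)]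
  exact hH.spectral_theorem

theorem diagonalizableR_posDef_mul_isSymm {A₁ A₂ : Matrix (Fin n) (Fin n) ℝ}
    (h₁ : A₁.PosDef) (h₂ : A₂.IsSymm) : DiagonalizableR (A₁ * A₂) := by
  obtain ⟨S, hSunit, hSsymm, rfl⟩ := h₁.exists_isUnit_isSymm_mul_self
  have hsymm : (S * A₂ * S).IsSymm := by
    rw [IsSymm, transpose_mul, transpose_mul, hSsymm.eq, h₂.eq, Matrix.mul_assoc]
  convert hsymm.diagonalizableR.conj hSunit using 1
  simp only [Matrix.mul_assoc, mul_nonsing_inv _ ((isUnit_iff_isUnit_det S).mp hSunit),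
    Matrix.mul_one]

theorem DiagonalizableR.exists_posDef_mul_isSymm {A : Matrix (Fin n) (Fin n) ℝ}
    (hA : DiagonalizableR A) :
    ∃ A₁ A₂ : Matrix (Fin n) (Fin n) ℝ, A₁.PosDef ∧ A₂.IsSymm ∧ A = A₁ * A₂ := by
  obtain ⟨P, Λ, hP, hΛ, rfl⟩ := hA
  have hPt : IsUnit Pᵀ.det := by rwa [det_transpose]
  refine ⟨P * Pᵀ, P⁻¹ᵀ * Λ * P⁻¹, posDef_mul_transpose_self ((isUnit_iff_isUnit_det P).mpr hP),
    ?_, ?_⟩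
  · rw [IsSymm, transpose_mul, transpose_mul, transpose_transpose, hΛ.isSymm.eq,
      Matrix.mul_assoc]
  · rw [transpose_nonsing_inv]
    simp only [Matrix.mul_assoc, mul_nonsing_inv_cancel_left _ _ hPt]

theorem diagonalizableR_iff_exists_posDef_mul_isSymm {A : Matrix (Fin n) (Fin n) ℝ} :
    DiagonalizableR A ↔
      ∃ A₁ A₂ : Matrix (Fin n) (Fin n) ℝ, A₁.PosDef ∧ A₂.IsSymm ∧ A = A₁ * A₂ :=
  ⟨DiagonalizableR.exists_posDef_mul_isSymm,
    fun ⟨_, _, h₁, h₂, hA⟩ => hA ▸ diagonalizableR_posDef_mul_isSymm h₁ h₂⟩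

end

/-- Symmetric factorization: `A` is diagonalizable over ℝ iff `A = A₁·A₂`
(and likewise iff `A = A₂·A₁`) with `A₁` symmetric positive definite and
`A₂` symmetric. -/
theorem diagonalizable_iff_symm_factorization {n : ℕ}
    (A : Matrix (Fin n) (Fin n) ℝ) :
    (DiagonalizableR A ↔
      ∃ A₁ A₂ : Matrix (Fin n) (Fin n) ℝ,
        A₁.IsSymm ∧ PosDefMat A₁ ∧ A₂.IsSymm ∧ A = A₁ * A₂) ∧
    (DiagonalizableR A ↔
      ∃ A₁ A₂ : Matrix (Fin n) (Fin n) ℝ,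
        A₁.IsSymm ∧ PosDefMat A₁ ∧ A₂.IsSymm ∧ A = A₂ * A₁) := by
  have iff_posDefMat_mul (B : Matrix (Fin n) (Fin n) ℝ) : DiagonalizableR B ↔
      ∃ A₁ A₂ : Matrix (Fin n) (Fin n) ℝ, A₁.IsSymm ∧ PosDefMat A₁ ∧ A₂.IsSymm ∧ B = A₁ * A₂ := by
    simp only [diagonalizableR_iff_exists_posDef_mul_isSymm, ← isSymm_and_posDefMat_iff_posDef,
      and_assoc]
  refine ⟨iff_posDefMat_mul A, ?_⟩
  rw [← diagonalizableR_transpose_iff, iff_posDefMat_mul]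
  refine exists₂_congr fun A₁ A₂ => and_congr_right fun h₁ => and_congr_right fun _ =>
    and_congr_right fun h₂ => ?_
  rw [← transpose_inj (A := A), transpose_mul, h₁.eq, h₂.eq]
end

section
/- Let A be a real n×n matrix. A is both normally elliptic and diagonalizable over ℝ (equivalently, diagonalizable with all eigenvalues real and positive) if and only if A is the product of two symmetric positive definite matrices. -/
/-!
If `A = P D P⁻¹` with `D` diagonal and positive, then `A = (P Pᵀ) (P⁻ᵀ D P⁻¹)` is a product of two
congruences of positive diagonal matrices. Conversely, writing `A₁ = Bᵀ B` with `B` invertible,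
`A₁ A₂ = Bᵀ (B A₂ Bᵀ) B⁻ᵀ` is similar to the symmetric positive definite matrix `B A₂ Bᵀ`, which the
spectral theorem diagonalizes with positive eigenvalues. For a matrix similar to a diagonal one,
normal ellipticity just says that the diagonal entries are positive.
-/

open Matrix

namespace Matrix

variable {ι : Type*} [Fintype ι] [DecidableEq ι]

lemma spectrum_mul_mul_nonsing_inv {R : Type*} [CommRing R] {P : Matrix ι ι R}
    (hP : IsUnit P.det) (M : Matrix ι ι R) : spectrum R (P * M * P⁻¹) = spectrum R M :=
  spectrum.units_conjugate (u := P.nonsingInvUnit hP)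

lemma map_nonsing_inv {R S : Type*} [CommRing R] [CommRing S] (f : R →+* S) {P : Matrix ι ι R}
    (hP : IsUnit P.det) : P⁻¹.map f = (P.map f)⁻¹ :=
  (inv_eq_right_inv (by
    rw [← Matrix.map_mul, mul_nonsing_inv P hP, Matrix.map_one _ f.map_zero f.map_one])).symm

lemma spectrum_map_conj_diagonal {R K : Type*} [CommRing R] [Field K] (f : R →+* K)
    {P : Matrix ι ι R} (hP : IsUnit P.det) (d : ι → R) :
    spectrum K ((P * diagonal d * P⁻¹).map f) = Set.range (f ∘ d) := by
  have hPf : IsUnit (P.map f).det := by simpa [RingHom.map_det] using hP.map f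
  rw [Matrix.map_mul, Matrix.map_mul, map_nonsing_inv f hP, spectrum_mul_mul_nonsing_inv hPf,
    diagonal_map f.map_zero, spectrum_diagonal]
  rfl

lemma exists_posDef_mul_eq_conj_diagonal {P : Matrix ι ι ℝ} {d : ι → ℝ} (hP : IsUnit P.det)
    (hd : ∀ i, 0 < d i) :
    ∃ A₁ A₂ : Matrix ι ι ℝ, A₁.PosDef ∧ A₂.PosDef ∧ P * diagonal d * P⁻¹ = A₁ * A₂ := by
  have hPu : IsUnit P := (isUnit_iff_isUnit_det P).2 hP
  refine ⟨P * Pᴴ, P⁻¹ᴴ * diagonal d * P⁻¹,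
    PosDef.mul_conjTranspose_self P (vecMul_injective_iff_isUnit.2 hPu),
    (PosDef.diagonal hd).conjTranspose_mul_mul_same
      (mulVec_injective_iff_isUnit.2 (isUnit_nonsing_inv_iff.2 hPu)), ?_⟩
  have hPt : IsUnit Pᴴ.det := by rwa [det_conjTranspose, star_trivial]
  rw [conjTranspose_nonsing_inv]
  simp only [Matrix.mul_assoc, mul_nonsing_inv_cancel_left _ _ hPt]

lemma PosDef.exists_eq_conj_diagonal {C : Matrix ι ι ℝ} (hC : C.PosDef) :
    ∃ (U : Matrix ι ι ℝ) (d : ι → ℝ), IsUnit U.det ∧ (∀ i, 0 < d i) ∧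
      C = U * diagonal d * U⁻¹ := by
  set U : Matrix ι ι ℝ := (hC.1.eigenvectorUnitary : Matrix ι ι ℝ)
  have hUU : U * star U = 1 := Matrix.mem_unitaryGroup_iff.mp hC.1.eigenvectorUnitary.2
  refine ⟨U, hC.1.eigenvalues, isUnit_det_of_right_inverse hUU, hC.eigenvalues_pos, ?_⟩
  rw [inv_eq_right_inv hUU]
  simpa using hC.1.spectral_theorem

open scoped MatrixOrder in
lemma PosDef.exists_mul_eq_conj_diagonal {A₁ A₂ : Matrix ι ι ℝ} (h₁ : A₁.PosDef)
    (h₂ : A₂.PosDef) : ∃ (P : Matrix ι ι ℝ) (d : ι → ℝ), IsUnit P.det ∧ (∀ i, 0 < d i) ∧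
      A₁ * A₂ = P * diagonal d * P⁻¹ := by
  obtain ⟨B, hB, rfl⟩ : ∃ B, IsUnit B ∧ A₁ = star B * B :=
    CStarAlgebra.isStrictlyPositive_iff_eq_star_mul_self.mp h₁.isStrictlyPositive
  obtain ⟨U, d, hU, hd, hC⟩ :=
    (h₂.mul_mul_conjTranspose_same (vecMul_injective_iff_isUnit.2 hB)).exists_eq_conj_diagonal
  have hBt : IsUnit Bᴴ.det := by
    rw [det_conjTranspose, star_trivial]; exact (isUnit_iff_isUnit_det B).1 hB
  refine ⟨Bᴴ * U, d, by rw [det_mul]; exact hBt.mul hU, hd, ?_⟩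
  calc star B * B * A₂ = Bᴴ * (B * A₂ * Bᴴ) * Bᴴ⁻¹ := by
        simp only [star_eq_conjTranspose, Matrix.mul_assoc, mul_nonsing_inv _ hBt, Matrix.mul_one]
    _ = Bᴴ * U * diagonal d * (Bᴴ * U)⁻¹ := by
        rw [hC, Matrix.mul_inv_rev]; simp only [Matrix.mul_assoc]

end Matrix

lemma normallyElliptic_conj_diagonal_iff {n : ℕ} {P : Matrix (Fin n) (Fin n) ℝ}
    (hP : IsUnit P.det) (d : Fin n → ℝ) :
    NormallyElliptic (P * diagonal d * P⁻¹) ↔ ∀ i, 0 < d i := by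
  change (∀ μ ∈ spectrum ℂ ((P * diagonal d * P⁻¹).map Complex.ofRealHom), 0 < μ.re) ↔ _
  rw [spectrum_map_conj_diagonal Complex.ofRealHom hP]
  simp

lemma normallyElliptic_and_diagonalizableR_iff {n : ℕ} {A : Matrix (Fin n) (Fin n) ℝ} :
    NormallyElliptic A ∧ DiagonalizableR A ↔ ∃ (P : Matrix (Fin n) (Fin n) ℝ) (d : Fin n → ℝ),
      IsUnit P.det ∧ (∀ i, 0 < d i) ∧ A = P * diagonal d * P⁻¹ := by
  constructor
  · rintro ⟨hA, P, Λ, hP, hΛ, rfl⟩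
    rw [← hΛ.diagonal_diag] at hA ⊢
    exact ⟨P, Λ.diag, hP, (normallyElliptic_conj_diagonal_iff hP _).1 hA, rfl⟩
  · rintro ⟨P, d, hP, hd, rfl⟩
    exact ⟨(normallyElliptic_conj_diagonal_iff hP d).2 hd, P, diagonal d, hP, isDiag_diagonal d,
      rfl⟩

lemma posDef_iff_isSymm_and_posDefMat {n : ℕ} {M : Matrix (Fin n) (Fin n) ℝ} :
    M.PosDef ↔ M.IsSymm ∧ PosDefMat M := by
  simp [posDef_iff_dotProduct_mulVec, PosDefMat, isHermitian_iff_isSymm]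

/-- Symmetric positive definite factorization: `A` is normally elliptic and
diagonalizable over ℝ iff it is the product of two symmetric positive definite
matrices. -/
theorem normallyElliptic_and_diagonalizable_iff_spd_factorization {n : ℕ}
    (A : Matrix (Fin n) (Fin n) ℝ) :
    (NormallyElliptic A ∧ DiagonalizableR A) ↔
      ∃ A₁ A₂ : Matrix (Fin n) (Fin n) ℝ,
        A₁.IsSymm ∧ PosDefMat A₁ ∧ A₂.IsSymm ∧ PosDefMat A₂ ∧ A = A₁ * A₂ := by
  rw [normallyElliptic_and_diagonalizableR_iff]
  constructor
  · rintro ⟨P, d, hP, hd, rfl⟩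
    obtain ⟨A₁, A₂, h₁, h₂, hA⟩ := exists_posDef_mul_eq_conj_diagonal hP hd
    rw [posDef_iff_isSymm_and_posDefMat] at h₁ h₂
    exact ⟨A₁, A₂, h₁.1, h₁.2, h₂.1, h₂.2, hA⟩
  · rintro ⟨A₁, A₂, h₁s, h₁, h₂s, h₂, rfl⟩
    exact (posDef_iff_isSymm_and_posDefMat.2 ⟨h₁s, h₁⟩).exists_mul_eq_conj_diagonal
      (posDef_iff_isSymm_and_posDefMat.2 ⟨h₂s, h₂⟩)
end

section
/- Let D be a set, and let A : D → ℝ^{n×n} and H : D → ℝ^{n×n} be matrix families such that H(u) is symmetric positive definite for every u ∈ D (H(u) plays the role of the Hessian h''(u) of a strictly convex entropy density). If H(u)·A(u) is positive definite for every u ∈ D (i.e., the system has an entropy structure), then A(u) is normally elliptic for every u ∈ D. -/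
open Matrix

lemma PosDefMat.nonneg {n : ℕ} {M : Matrix (Fin n) (Fin n) ℝ} (hM : PosDefMat M)
    (v : Fin n → ℝ) : 0 ≤ v ⬝ᵥ M.mulVec v := by
  rcases eq_or_ne v 0 with rfl | hv
  · simp
  · exact (hM v hv).le

/-- If the system has an entropy structure (i.e. `H(u)·A(u)` is positive
definite with `H(u)` symmetric positive definite, for all `u`), then the
diffusion matrix `A(u)` is normally elliptic for all `u`. -/
theorem normallyElliptic_of_entropyStructure {n : ℕ} {D : Type*}
    (A H : D → Matrix (Fin n) (Fin n) ℝ)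
    (hHsymm : ∀ u : D, (H u).IsSymm) (hHpd : ∀ u : D, PosDefMat (H u))
    (hHA : ∀ u : D, PosDefMat (H u * A u)) :
    ∀ u : D, NormallyElliptic (A u) := by
  intro u μ hμ
  set B := (A u).map Complex.ofReal with hB
  -- get an eigenvector
  rw [← AlgEquiv.spectrum_eq
    (Matrix.toLinAlgEquiv' : Matrix (Fin n) (Fin n) ℂ ≃ₐ[ℂ] _) B] at hμ
  obtain ⟨z, hz⟩ :=
    (Module.End.HasEigenvalue.of_mem_spectrum hμ).exists_hasEigenvector
  have heq : B.mulVec z = μ • z := by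
    have := hz.apply_eq_smul
    simpa [Matrix.toLinAlgEquiv'_apply] using this
  have hzne : z ≠ 0 := hz.2
  set x : Fin n → ℝ := fun i => (z i).re with hx
  set y : Fin n → ℝ := fun i => (z i).im with hy
  -- real and imaginary parts of the eigenvalue equation
  have hre : (A u).mulVec x = μ.re • x - μ.im • y := by
    funext i
    have h := congrArg Complex.re (congrFun heq i)
    simp only [mulVec, dotProduct, hB, Matrix.map_apply, Complex.re_sum,
      Complex.mul_re, Complex.ofReal_re, Complex.ofReal_im, Pi.smul_apply,
      smul_eq_mul, zero_mul, sub_zero] at h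
    simpa [mulVec, dotProduct, hx, hy] using h
  have him : (A u).mulVec y = μ.re • y + μ.im • x := by
    funext i
    have h := congrArg Complex.im (congrFun heq i)
    simp only [mulVec, dotProduct, hB, Matrix.map_apply, Complex.im_sum,
      Complex.mul_im, Complex.ofReal_re, Complex.ofReal_im, Pi.smul_apply,
      smul_eq_mul, zero_mul, add_zero] at h
    simpa [mulVec, dotProduct, hx, hy, mul_comm] using h
  -- x and y are not both zero
  have hxy : x ≠ 0 ∨ y ≠ 0 := by
    by_contra hcon
    push_neg at hcon
    apply hzne
    funext i
    have h1 := congrFun hcon.1 i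
    have h2 := congrFun hcon.2 i
    simp only [hx, hy, Pi.zero_apply] at h1 h2
    exact Complex.ext h1 h2
  -- symmetry of H
  have hsym : x ⬝ᵥ (H u).mulVec y = y ⬝ᵥ (H u).mulVec x := by
    rw [Matrix.dotProduct_mulVec, ← Matrix.mulVec_transpose, (hHsymm u).eq,
      dotProduct_comm]
  -- the key quantity
  have hS : x ⬝ᵥ (H u * A u).mulVec x + y ⬝ᵥ (H u * A u).mulVec y
      = μ.re * (x ⬝ᵥ (H u).mulVec x + y ⬝ᵥ (H u).mulVec y) := by
    rw [← Matrix.mulVec_mulVec, ← Matrix.mulVec_mulVec, hre, him]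
    simp only [Matrix.mulVec_add, Matrix.mulVec_sub, Matrix.mulVec_smul,
      dotProduct_add, dotProduct_sub, dotProduct_smul,
      smul_eq_mul]
    rw [hsym]
    ring
  have hSpos : 0 < x ⬝ᵥ (H u * A u).mulVec x + y ⬝ᵥ (H u * A u).mulVec y := by
    rcases hxy with hx0 | hy0
    · have := hHA u x hx0
      have := (hHA u).nonneg y
      linarith
    · have := hHA u y hy0
      have := (hHA u).nonneg x
      linarith
  have hTpos : 0 < x ⬝ᵥ (H u).mulVec x + y ⬝ᵥ (H u).mulVec y := by
    rcases hxy with hx0 | hy0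
    · have := hHpd u x hx0
      have := (hHpd u).nonneg y
      linarith
    · have := hHpd u y hy0
      have := (hHpd u).nonneg x
      linarith
  nlinarith [hS, hSpos, hTpos]
end

section
/- Let D be a set, and let A : D → ℝ^{n×n} and H : D → ℝ^{n×n} be matrix families such that H(u) is symmetric positive definite for every u ∈ D (H(u) plays the role of the Hessian h''(u) of a strictly convex entropy density). If A(u) is normally elliptic for every u ∈ D and H(u)·A(u) is symmetric for every u ∈ D, then H(u)·A(u) is positive definite for every u ∈ D, i.e., the system has an entropy structure. -/
open Matrix

/-!
Write `H = b⋆ b` with `b` invertible. Then `(b⋆)⁻¹ (H A) b⁻¹ = b A b⁻¹` is self-adjoint, because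
`H A` is, and similar to `A`, so its spectrum is that of `A`. A self-adjoint element with positive
spectrum is strictly positive, hence so is its congruent `H A`. For a real matrix `A`, every real
eigenvalue is also a complex one, so normal ellipticity makes the real spectrum positive.
-/

section StrictPositivity

variable {A : Type*} [PartialOrder A] [Ring A] [StarRing A] [TopologicalSpace A]
  [StarOrderedRing A] [Algebra ℝ A] [ContinuousFunctionalCalculus ℝ A IsSelfAdjoint]
  [NonnegSpectrumClass ℝ A] [IsSemitopologicalRing A] [T2Space A]

theorem IsStrictlyPositive.mul_of_spectrum_pos {h a : A} (hh : IsStrictlyPositive h)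
    (ha : ∀ x ∈ spectrum ℝ a, 0 < x) (hha : IsSelfAdjoint (h * a)) :
    IsStrictlyPositive (h * a) := by
  obtain ⟨b, hb, rfl⟩ := CStarAlgebra.isStrictlyPositive_iff_eq_star_mul_self.mp hh
  lift b to Aˣ using hb
  have hconj : star (b : A) * b * a = star (b : A) * (b * a * ↑b⁻¹) * b := by
    simp [mul_assoc]
  have hsa : IsSelfAdjoint ((b : A) * a * ↑b⁻¹) := by
    convert hha.conjugate' (↑b⁻¹ : A) using 1
    simp [← mul_assoc, ← star_mul]
  rw [hconj, b.isUnit.isStrictlyPositive_star_left_conjugate_iff,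
    StarOrderedRing.isStrictlyPositive_iff_spectrum_pos (R := ℝ) _ hsa, spectrum.units_conjugate]
  exact ha

end StrictPositivity

namespace Matrix

open scoped ComplexOrder MatrixOrder in
theorem PosDef.mul_of_spectrum_pos {n 𝕜 : Type*} [Fintype n] [DecidableEq n] [RCLike 𝕜]
    {H A : Matrix n n 𝕜} (hH : H.PosDef) (hA : ∀ x ∈ spectrum ℝ A, 0 < x)
    (hHA : (H * A).IsHermitian) : (H * A).PosDef :=
  (hH.isStrictlyPositive.mul_of_spectrum_pos hA hHA).posDef

theorem map_mem_spectrum {n K L : Type*} [Fintype n] [DecidableEq n] [Field K] [CommRing L]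
    [Nontrivial L] (f : K →+* L) {M : Matrix n n K} {x : K} (hx : x ∈ spectrum K M) :
    f x ∈ spectrum L (M.map f) := by
  rw [mem_spectrum_iff_isRoot_charpoly] at hx
  exact mem_spectrum_of_isRoot_charpoly (by simpa [charpoly_map] using hx.map (f := f))

theorem IsSymm.posDefMat_iff_posDef {n : ℕ} {M : Matrix (Fin n) (Fin n) ℝ} (hM : M.IsSymm) :
    PosDefMat M ↔ M.PosDef := by
  rw [posDef_iff_dotProduct_mulVec, isHermitian_iff_isSymm]
  simp [PosDefMat, hM]

end Matrix

theorem NormallyElliptic.pos_of_mem_spectrum {n : ℕ} {A : Matrix (Fin n) (Fin n) ℝ}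
    (hA : NormallyElliptic A) {x : ℝ} (hx : x ∈ spectrum ℝ A) : 0 < x := by
  simpa using hA _ (map_mem_spectrum Complex.ofRealHom hx)

/-- If `A(u)` is normally elliptic for all `u` and `H(u)·A(u)` is symmetric
for all `u` (with `H(u)` symmetric positive definite), then `H(u)·A(u)` is
positive definite for all `u`, i.e. the system has an entropy structure. -/
theorem entropyStructure_of_normallyElliptic_of_symm {n : ℕ} {D : Type*}
    (A H : D → Matrix (Fin n) (Fin n) ℝ)
    (hHsymm : ∀ u : D, (H u).IsSymm) (hHpd : ∀ u : D, PosDefMat (H u))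
    (hA : ∀ u : D, NormallyElliptic (A u))
    (hHAsymm : ∀ u : D, (H u * A u).IsSymm) :
    ∀ u : D, PosDefMat (H u * A u) := by
  intro u
  rw [(hHAsymm u).posDefMat_iff_posDef]
  exact ((hHsymm u).posDefMat_iff_posDef.mp (hHpd u)).mul_of_spectrum_pos
    (fun _ hx => (hA u).pos_of_mem_spectrum hx) (isHermitian_iff_isSymm.mpr (hHAsymm u))
end

section
/- Let A be a constant real n×n matrix. Then A is normally elliptic if and only if there exists a symmetric positive definite matrix H ∈ ℝ^{n×n} such that H·A is positive definite; i.e., a constant-coefficient cross-diffusion system has an entropy structure (with the quadratic entropy density h(u) = ½·uᵀHu) exactly when its diffusion matrix is normally elliptic. -/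
/-!
If every eigenvalue of `A` has positive real part, then `exp (-t A) → 0` as `t → ∞`: on the
generalized eigenspace of `μ`, `exp (-t A)` acts as `e^{-tμ}` times a polynomial in `t`.
This decay makes the Lyapunov operator `X ↦ Aᵀ X + X A` injective, because for a solution of
`Aᵀ X + X A = 0` the matrix `E(t)ᵀ X E(t)`, `E(t) = exp (-t A)`, is constant and tends to `0`.
Hence `Aᵀ H + H A = 1` has a solution `H`, symmetric by uniqueness. Along the flow,
`xᵀ E(t)ᵀ H E(t) x` strictly decreases to `0`, so `H` is positive definite, and
`xᵀ H A x = ½ |x|²`. Conversely, if `A v = μ v` with `v ≠ 0` complex, then `v* H A v = μ v* H v`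
where `v* H v > 0` is real and `Re (v* H A v) > 0`, which forces `Re μ > 0`.
-/

open Matrix

open NormedSpace Filter Topology Finset

attribute [local instance] Matrix.linftyOpNormedAddCommGroup Matrix.linftyOpNormedRing
  Matrix.linftyOpNormedAlgebra

theorem Complex.tendsto_pow_mul_exp_neg_mul_atTop_nhds_zero (j : ℕ) {μ : ℂ} (hμ : 0 < μ.re) :
    Tendsto (fun t : ℝ => (t : ℂ) ^ j * Complex.exp (-(t * μ))) atTop (𝓝 0) := by
  rw [tendsto_zero_iff_norm_tendsto_zero]
  refine (tendsto_rpow_mul_exp_neg_mul_atTop_nhds_zero j μ.re hμ).congr' ?_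
  filter_upwards [eventually_ge_atTop 0] with t ht
  simp [Complex.norm_exp, abs_of_nonneg ht, mul_comm]

variable {ι : Type*} [Fintype ι]

theorem HasDerivAt.dotProduct_mulVec {g : ℝ → Matrix ι ι ℝ} {g' : Matrix ι ι ℝ} {t : ℝ}
    (hg : HasDerivAt g g' t) (x y : ι → ℝ) :
    HasDerivAt (fun s => x ⬝ᵥ g s *ᵥ y) (x ⬝ᵥ g' *ᵥ y) t := by
  have hentry (i j : ι) : HasDerivAt (fun s => g s i j) (g' i j) t :=
    hasDerivAt_pi.1 (hasDerivAt_pi.1 hg i) j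
  exact HasDerivAt.fun_sum fun i _ =>
    (HasDerivAt.fun_sum fun j _ => (hentry i j).mul_const (y j)).const_mul (x i)

namespace Matrix

theorem re_star_dotProduct_map_ofReal_mulVec (M : Matrix ι ι ℝ) (v : ι → ℂ) :
    (star v ⬝ᵥ M.map Complex.ofReal *ᵥ v).re =
      (fun i => (v i).re) ⬝ᵥ M *ᵥ (fun i => (v i).re) +
        (fun i => (v i).im) ⬝ᵥ M *ᵥ (fun i => (v i).im) := by
  simp only [dotProduct, mulVec, Complex.re_sum, mul_sum, ← sum_add_distrib]
  refine sum_congr rfl fun i _ => sum_congr rfl fun j _ => ?_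
  simp [Complex.mul_re]

theorem re_star_dotProduct_map_ofReal_mulVec_pos {M : Matrix ι ι ℝ}
    (hM : ∀ x : ι → ℝ, x ≠ 0 → 0 < x ⬝ᵥ M *ᵥ x) {v : ι → ℂ} (hv : v ≠ 0) :
    0 < (star v ⬝ᵥ M.map Complex.ofReal *ᵥ v).re := by
  have hM' (x : ι → ℝ) : 0 ≤ x ⬝ᵥ M *ᵥ x := by
    rcases eq_or_ne x 0 with rfl | hx
    · simp
    · exact (hM x hx).le
  rw [re_star_dotProduct_map_ofReal_mulVec]
  by_cases hre : (fun i => (v i).re) = 0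
  · have him : (fun i => (v i).im) ≠ 0 := fun him =>
      hv (funext fun i => Complex.ext (congrFun hre i) (congrFun him i))
    exact add_pos_of_nonneg_of_pos (hM' _) (hM _ him)
  · exact add_pos_of_pos_of_nonneg (hM _ hre) (hM' _)

variable [DecidableEq ι]

theorem exp_smul_mulVec_eq_sum {𝕂 : Type*} [RCLike 𝕂] (N : Matrix ι ι 𝕂) {w : ι → 𝕂}
    {k : ℕ} (hk : N ^ k *ᵥ w = 0) (s : 𝕂) :
    exp (s • N) *ᵥ w = ∑ j ∈ range k, (s ^ j / j.factorial) • (N ^ j *ᵥ w) := by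
  have hsum : HasSum (fun j => ((j.factorial : 𝕂)⁻¹ • (s • N) ^ j) *ᵥ w) (exp (s • N) *ᵥ w) :=
    (exp_series_hasSum_exp' (s • N)).map (mulVec.addMonoidHomLeft w)
      (continuous_id.matrix_mulVec continuous_const)
  refine hsum.unique (hasSum_sum_of_ne_finset_zero fun j hj => ?_) |>.trans
    (sum_congr rfl fun j _ => ?_)
  · obtain ⟨i, rfl⟩ := Nat.exists_eq_add_of_le' (not_lt.mp (mem_range.not.mp hj))
    rw [smul_pow, smul_mulVec, smul_mulVec, pow_add N, ← mulVec_mulVec, hk, mulVec_zero,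
      smul_zero, smul_zero]
  · rw [smul_pow, smul_mulVec, smul_mulVec, smul_smul, div_eq_inv_mul]

theorem tendsto_exp_neg_smul_mulVec_of_pow_mulVec_eq_zero (B : Matrix ι ι ℂ) {μ : ℂ}
    (hμ : 0 < μ.re) {w : ι → ℂ} {k : ℕ} (hk : (B - μ • 1) ^ k *ᵥ w = 0) :
    Tendsto (fun t : ℝ => exp ((-t : ℂ) • B) *ᵥ w) atTop (𝓝 0) := by
  set N := B - μ • 1
  have hexp (t : ℝ) : exp ((-t : ℂ) • B) *ᵥ w = ∑ j ∈ range k,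
      ((-1) ^ j / j.factorial * ((t : ℂ) ^ j * Complex.exp (-(t * μ)))) • (N ^ j *ᵥ w) := by
    have hsplit : (-t : ℂ) • B = (-t : ℂ) • N + algebraMap ℂ _ (-(t * μ)) := by
      simp [N, Algebra.algebraMap_eq_smul_one, smul_sub, smul_smul]
    have hscalar : exp (algebraMap ℂ (Matrix ι ι ℂ) (-(t * μ))) =
        algebraMap ℂ _ (Complex.exp (-(t * μ))) := by
      rw [Complex.exp_eq_exp_ℂ]; exact (algebraMap_exp_comm _).symm
    rw [hsplit, Matrix.exp_add_of_commute _ _ (Algebra.commute_algebraMap_right _ _),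
      hscalar, Algebra.algebraMap_eq_smul_one, mul_smul_one, smul_mulVec,
      exp_smul_mulVec_eq_sum N hk, smul_sum]
    refine sum_congr rfl fun j _ => ?_
    rw [smul_smul, neg_pow]
    ring_nf
  simp_rw [hexp]
  rw [← sum_const_zero (s := range k)]
  refine tendsto_finsetSum _ fun j _ => ?_
  simpa using ((Complex.tendsto_pow_mul_exp_neg_mul_atTop_nhds_zero j hμ).const_mul
    ((-1) ^ j / j.factorial : ℂ)).smul_const (N ^ j *ᵥ w)

theorem tendsto_exp_neg_smul_of_re_pos (B : Matrix ι ι ℂ)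
    (hB : ∀ μ ∈ spectrum ℂ B, 0 < μ.re) :
    Tendsto (fun t : ℝ => exp ((-t : ℂ) • B)) atTop (𝓝 0) := by
  have hvec (v : ι → ℂ) : Tendsto (fun t : ℝ => exp ((-t : ℂ) • B) *ᵥ v) atTop (𝓝 0) := by
    have hv : v ∈ ⨆ μ, Module.End.maxGenEigenspace (toLin' B) μ := by
      rw [Module.End.iSup_maxGenEigenspace_eq_top]; trivial
    refine Submodule.iSup_induction _
      (motive := fun v => Tendsto (fun t : ℝ => exp ((-t : ℂ) • B) *ᵥ v) atTop (𝓝 0))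
      hv (fun μ w hw => ?_) (by simp) fun v w hv hw => by simpa [mulVec_add] using hv.add hw
    obtain ⟨k, hk⟩ := (Module.End.mem_maxGenEigenspace _ _ _).mp hw
    rcases eq_or_ne w 0 with rfl | hw0
    · simp
    have hμ : μ ∈ spectrum ℂ B := by
      rw [← spectrum_toLin', ← Module.End.hasEigenvalue_iff_mem_spectrum]
      refine Module.End.hasEigenvalue_of_hasGenEigenvalue (k := k) ?_
      rw [Module.End.hasGenEigenvalue_iff, Submodule.ne_bot_iff]
      exact ⟨w, Module.End.mem_genEigenspace_nat.mpr hk, hw0⟩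
    have hk' : (B - μ • 1) ^ k *ᵥ w = 0 := by
      simpa [← toLin'_apply, toLin'_pow, map_sub, Module.End.one_eq_id] using hk
    exact tendsto_exp_neg_smul_mulVec_of_pow_mulVec_eq_zero B (hB μ hμ) hk'
  refine tendsto_pi_nhds.2 fun i => tendsto_pi_nhds.2 fun j => ?_
  simpa [mulVec_single] using tendsto_pi_nhds.1 (hvec (Pi.single j 1)) i

theorem exp_map_ofReal (M : Matrix ι ι ℝ) :
    exp (M.map Complex.ofReal) = (exp M).map Complex.ofReal :=
  (map_exp (Complex.ofRealHom.mapMatrix : Matrix ι ι ℝ →+* Matrix ι ι ℂ)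
    (continuous_id.matrix_map Complex.continuous_ofReal) M).symm

theorem hasDerivAt_transpose_exp_mul_mul_exp (A X : Matrix ι ι ℝ) (t : ℝ) :
    HasDerivAt (fun s : ℝ => (exp (s • -A))ᵀ * X * exp (s • -A))
      (-((exp (t • -A))ᵀ * (Aᵀ * X + X * A) * exp (t • -A))) t := by
  have hT : HasDerivAt (fun s : ℝ => exp (s • -Aᵀ)) (exp (t • -Aᵀ) * -Aᵀ) t :=
    hasDerivAt_exp_smul_const (-Aᵀ) t
  simp only [← transpose_neg, ← transpose_smul, exp_transpose] at hT
  have hprod : HasDerivAt (fun s : ℝ => (exp (s • -A))ᵀ * X * exp (s • -A))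
      ((exp (t • -A))ᵀ * -Aᵀ * X * exp (t • -A) + (exp (t • -A))ᵀ * X * (-A * exp (t • -A))) t :=
    (hT.mul_const X).mul (hasDerivAt_exp_smul_const' (-A) t)
  convert hprod using 1
  noncomm_ring

theorem tendsto_transpose_exp_mul_mul_exp {A : Matrix ι ι ℝ}
    (hA : Tendsto (fun t : ℝ => exp (t • -A)) atTop (𝓝 0)) (X : Matrix ι ι ℝ) :
    Tendsto (fun t : ℝ => (exp (t • -A))ᵀ * X * exp (t • -A)) atTop (𝓝 0) := by
  have hT : Tendsto (fun t : ℝ => (exp (t • -A))ᵀ) atTop (𝓝 0) := by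
    simpa [Function.comp_def] using (continuous_id.matrix_transpose.tendsto 0).comp hA
  simpa using (hT.mul_const X).mul hA

theorem eq_zero_of_transpose_mul_add_mul_eq_zero {A : Matrix ι ι ℝ}
    (hA : Tendsto (fun t : ℝ => exp (t • -A)) atTop (𝓝 0))
    {X : Matrix ι ι ℝ} (hX : Aᵀ * X + X * A = 0) : X = 0 := by
  have hderiv (t : ℝ) := hasDerivAt_transpose_exp_mul_mul_exp A X t
  simp only [hX, mul_zero, zero_mul, neg_zero] at hderiv
  have hconst (t : ℝ) : (exp (t • -A))ᵀ * X * exp (t • -A) = X := by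
    simpa using is_const_of_deriv_eq_zero (fun s => (hderiv s).differentiableAt)
      (fun s => (hderiv s).deriv) t 0
  exact tendsto_nhds_unique (tendsto_const_nhds.congr fun t => (hconst t).symm)
    (tendsto_transpose_exp_mul_mul_exp hA X)

theorem exists_isSymm_transpose_mul_add_mul_eq_one {A : Matrix ι ι ℝ}
    (hA : Tendsto (fun t : ℝ => exp (t • -A)) atTop (𝓝 0)) :
    ∃ H : Matrix ι ι ℝ, H.IsSymm ∧ Aᵀ * H + H * A = 1 := by
  let L : Matrix ι ι ℝ →ₗ[ℝ] Matrix ι ι ℝ := LinearMap.mulLeft ℝ Aᵀ + LinearMap.mulRight ℝ A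
  have hL (X : Matrix ι ι ℝ) : L X = Aᵀ * X + X * A := rfl
  have hinj : Function.Injective L := by
    rw [← LinearMap.ker_eq_bot, LinearMap.ker_eq_bot']
    exact fun X hX => eq_zero_of_transpose_mul_add_mul_eq_zero hA hX
  obtain ⟨H, hH⟩ := LinearMap.injective_iff_surjective.mp hinj 1
  refine ⟨H, hinj ?_, hH⟩
  calc L Hᵀ = (L H)ᵀ := by
        simp only [hL, transpose_add, transpose_mul, transpose_transpose, add_comm]
    _ = L H := by rw [hH, transpose_one]

theorem dotProduct_mulVec_pos_of_transpose_mul_add_mul_eq_one {A : Matrix ι ι ℝ}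
    (hA : Tendsto (fun t : ℝ => exp (t • -A)) atTop (𝓝 0))
    {H : Matrix ι ι ℝ} (hH : Aᵀ * H + H * A = 1) {x : ι → ℝ} (hx : x ≠ 0) : 0 < x ⬝ᵥ H *ᵥ x := by
  set f : ℝ → ℝ := fun t => x ⬝ᵥ ((exp (t • -A))ᵀ * H * exp (t • -A)) *ᵥ x
  have hderiv (t : ℝ) : HasDerivAt f (-(exp (t • -A) *ᵥ x ⬝ᵥ exp (t • -A) *ᵥ x)) t := by
    convert (hasDerivAt_transpose_exp_mul_mul_exp A H t).dotProduct_mulVec x x using 1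
    rw [hH, Matrix.mul_one, neg_mulVec, dotProduct_neg, ← mulVec_mulVec,
      dotProduct_transpose_mulVec]
  have hanti : StrictAnti f := strictAnti_of_deriv_neg fun t => by
    have hEx : exp (t • -A) *ᵥ x ≠ 0 := fun h =>
      hx (mulVec_injective_iff_isUnit.mpr (Matrix.isUnit_exp (t • -A))
        (h.trans (mulVec_zero _).symm))
    rw [(hderiv t).deriv, neg_lt_zero]
    simpa using dotProduct_star_self_pos_iff.mpr hEx
  have hlim : Tendsto f atTop (𝓝 0) := by
    have hc : Continuous fun M : Matrix ι ι ℝ => x ⬝ᵥ M *ᵥ x :=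
      continuous_const.dotProduct (continuous_id.matrix_mulVec continuous_const)
    have := (hc.tendsto 0).comp (tendsto_transpose_exp_mul_mul_exp hA H)
    rwa [zero_mulVec, dotProduct_zero] at this
  calc 0 ≤ f 1 := le_of_tendsto hlim ((eventually_ge_atTop 1).mono fun _ ht => hanti.antitone ht)
    _ < f 0 := hanti zero_lt_one
    _ = x ⬝ᵥ H *ᵥ x := by simp [f]

theorem dotProduct_mul_mulVec_pos_of_transpose_mul_add_mul_eq_one {A H : Matrix ι ι ℝ}
    (hHs : H.IsSymm) (hH : Aᵀ * H + H * A = 1) {x : ι → ℝ} (hx : x ≠ 0) :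
    0 < x ⬝ᵥ (H * A) *ᵥ x := by
  have hAH : x ⬝ᵥ (Aᵀ * H) *ᵥ x = x ⬝ᵥ (H * A) *ᵥ x := by
    rw [show Aᵀ * H = (H * A)ᵀ by rw [transpose_mul, hHs.eq], dotProduct_transpose_mulVec]
  have hsum := congrArg (fun M => x ⬝ᵥ M *ᵥ x) hH
  simp only [add_mulVec, dotProduct_add, hAH, one_mulVec] at hsum
  have hxx : 0 < x ⬝ᵥ x := by simpa using dotProduct_star_self_pos_iff.mpr hx
  linarith

theorem exists_isSymm_posDef_and_mul_posDef_of_tendsto_exp {A : Matrix ι ι ℝ}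
    (hA : Tendsto (fun t : ℝ => exp (t • -A)) atTop (𝓝 0)) :
    ∃ H : Matrix ι ι ℝ, H.IsSymm ∧ (∀ x : ι → ℝ, x ≠ 0 → 0 < x ⬝ᵥ H *ᵥ x) ∧
      ∀ x : ι → ℝ, x ≠ 0 → 0 < x ⬝ᵥ (H * A) *ᵥ x := by
  obtain ⟨H, hHs, hH⟩ := exists_isSymm_transpose_mul_add_mul_eq_one hA
  exact ⟨H, hHs, fun _ => dotProduct_mulVec_pos_of_transpose_mul_add_mul_eq_one hA hH,
    fun _ => dotProduct_mul_mulVec_pos_of_transpose_mul_add_mul_eq_one hHs hH⟩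

theorem re_pos_of_mem_spectrum_map_ofReal {A H : Matrix ι ι ℝ} (hHs : H.IsSymm)
    (hH : ∀ x : ι → ℝ, x ≠ 0 → 0 < x ⬝ᵥ H *ᵥ x)
    (hHA : ∀ x : ι → ℝ, x ≠ 0 → 0 < x ⬝ᵥ (H * A) *ᵥ x) {μ : ℂ}
    (hμ : μ ∈ spectrum ℂ (A.map Complex.ofReal)) : 0 < μ.re := by
  rw [← spectrum_toLin', ← Module.End.hasEigenvalue_iff_mem_spectrum] at hμ
  obtain ⟨v, hv⟩ := hμ.exists_hasEigenvector
  have hAv : A.map Complex.ofReal *ᵥ v = μ • v := hv.apply_eq_smul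
  have hHerm : (H.map Complex.ofReal).IsHermitian := by
    ext i j; simp [hHs.apply i j]
  have him : (star v ⬝ᵥ H.map Complex.ofReal *ᵥ v).im = 0 :=
    hHerm.im_star_dotProduct_mulVec_self v
  have hquad : star v ⬝ᵥ (H * A).map Complex.ofReal *ᵥ v =
      μ * (star v ⬝ᵥ H.map Complex.ofReal *ᵥ v) := by
    rw [show (H * A).map Complex.ofReal = H.map Complex.ofReal * A.map Complex.ofReal from
      Matrix.map_mul (f := Complex.ofRealHom), ← mulVec_mulVec, hAv, mulVec_smul,
      dotProduct_smul, smul_eq_mul]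
  have hre := re_star_dotProduct_map_ofReal_mulVec_pos hHA hv.2
  rw [hquad, Complex.mul_re, him, mul_zero, sub_zero] at hre
  exact pos_of_mul_pos_left hre (re_star_dotProduct_map_ofReal_mulVec_pos hH hv.2).le

end Matrix

theorem NormallyElliptic.tendsto_exp_neg_smul {n : ℕ} {A : Matrix (Fin n) (Fin n) ℝ}
    (hA : NormallyElliptic A) : Tendsto (fun t : ℝ => exp (t • -A)) atTop (𝓝 0) := by
  have hre : Tendsto (fun t : ℝ => (exp ((-t : ℂ) • A.map Complex.ofReal)).map Complex.re)
      atTop (𝓝 ((0 : Matrix (Fin n) (Fin n) ℂ).map Complex.re)) :=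
    ((continuous_id.matrix_map Complex.continuous_re).tendsto 0).comp
      (tendsto_exp_neg_smul_of_re_pos _ hA)
  rw [Matrix.map_zero _ Complex.zero_re] at hre
  refine hre.congr fun t => ?_
  have : (-t : ℂ) • A.map Complex.ofReal = (t • -A).map Complex.ofReal := by ext; simp
  rw [this, exp_map_ofReal, Matrix.map_map]
  exact Matrix.map_id' _

/-- A constant diffusion matrix is normally elliptic iff there is a symmetric
positive definite `H` such that `H·A` is positive definite (entropy structure
with quadratic entropy density `h(u) = ½ uᵀHu`). -/
theorem normallyElliptic_iff_entropyStructure_const {n : ℕ}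
    (A : Matrix (Fin n) (Fin n) ℝ) :
    NormallyElliptic A ↔
      ∃ H : Matrix (Fin n) (Fin n) ℝ, H.IsSymm ∧ PosDefMat H ∧
        PosDefMat (H * A) :=
  ⟨fun hA => exists_isSymm_posDef_and_mul_posDef_of_tendsto_exp hA.tendsto_exp_neg_smul,
    fun ⟨_, hHs, hH, hHA⟩ _ hμ => re_pos_of_mem_spectrum_map_ofReal hHs hH hHA hμ⟩
end

section
/- Let A₀ be a normally elliptic real n×n matrix and let M ≥ 0 be a real number. Then there exist a symmetric positive definite matrix H ∈ ℝ^{n×n} and ε₀ > 0 such that for every ε with 0 < ε < ε₀ and every real n×n matrix B with ‖B‖ ≤ M (operator norm on Euclidean ℝⁿ), the matrix H·(A₀ + ε·B) is positive definite. In particular, any diffusion matrix of the form A(u) = A₀ + ε·A₁(u) with A₁ bounded by M admits an entropy structure for all sufficiently small ε > 0. -/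
open Matrix

/-- The operator norm of a matrix acting on Euclidean ℝⁿ. -/
noncomputable def matOpNorm {n : ℕ} (M : Matrix (Fin n) (Fin n) ℝ) : ℝ :=
  ‖Matrix.toEuclideanCLM (𝕜 := ℝ) M‖

/-!
Lyapunov's theorem gives a symmetric positive definite `H` and `α > 0` with
`zᵀ H A₀ z ≥ α |z|²`; the perturbation changes this form by at most `ε ‖H‖ ‖B‖ |z|²`, so
positivity survives for `ε < α / (‖H‖ M + 1)`.

To find `H`: as `|1 - δ μ|² = 1 - 2 δ Re μ + δ² |μ|²`, for small `δ > 0` the spectrum of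
`C = 1 - δ A₀` lies in the open unit disc, so by Gelfand's formula `c = ‖C ^ m‖ < 1` for some
`m ≥ 1`. The Gramian `H = ∑_{j<m} (C ^ j)ᵀ C ^ j` telescopes to
`H - Cᵀ H C = 1 - (C ^ m)ᵀ C ^ m ≥ (1 - c²) 1`, while `H - Cᵀ H C = δ (H A₀ + A₀ᵀ H) - δ² A₀ᵀ H A₀`;
hence `α = (1 - c²) / (2 δ)` works.
-/

open Filter WithLp
open scoped Matrix.Norms.L2Operator

theorem Complex.norm_one_sub_ofReal_mul_lt_one {δ : ℝ} {μ : ℂ} (hδ : 0 < δ)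
    (h : δ * ‖μ‖ ^ 2 < 2 * μ.re) : ‖1 - δ * μ‖ < 1 := by
  rw [← sq_lt_one_iff₀ (norm_nonneg _), ← Complex.normSq_eq_norm_sq]
  rw [← Complex.normSq_eq_norm_sq, Complex.normSq_apply] at h
  simp only [Complex.normSq_apply, Complex.sub_re, Complex.sub_im, Complex.mul_re, Complex.mul_im,
    Complex.ofReal_re, Complex.ofReal_im, Complex.one_re, Complex.one_im]
  nlinarith

namespace spectrum

theorem exists_eq_one_sub_mul_of_mem_one_sub_smul {R A : Type*} [Field R] [Ring A] [Algebra R A]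
    {a : A} {δ : R} (hδ : δ ≠ 0) {μ : R} (hμ : μ ∈ spectrum R (1 - δ • a)) :
    ∃ ν ∈ spectrum R a, μ = 1 - δ * ν := by
  rw [← map_one (algebraMap R A), ← singleton_sub_eq] at hμ
  obtain ⟨_, rfl, ν, hν, rfl⟩ := hμ
  refine ⟨ν / δ, ?_, by field_simp⟩
  rw [← smul_mem_smul_iff (r := Units.mk0 δ hδ)]
  simpa [Units.smul_def, mul_div_cancel₀ _ hδ] using hν

variable {A : Type*} [NormedRing A] [NormedAlgebra ℂ A] [CompleteSpace A]

theorem exists_norm_lt_one_on_spectrum_one_sub_smul (a : A)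
    (h : ∀ μ ∈ spectrum ℂ a, 0 < μ.re) :
    ∃ δ : ℝ, 0 < δ ∧ ∀ μ ∈ spectrum ℂ (1 - (δ : ℂ) • a), ‖μ‖ < 1 := by
  obtain ⟨r, hr, hre⟩ := (spectrum.isCompact a).exists_forall_le'
    Complex.continuous_re.continuousOn h
  obtain ⟨R, hR⟩ := (spectrum.isBounded (𝕜 := ℂ) a).exists_norm_le
  have hδ : 0 < r / (R ^ 2 + 1) := by positivity
  refine ⟨r / (R ^ 2 + 1), hδ, fun μ hμ => ?_⟩
  obtain ⟨ν, hν, rfl⟩ :=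
    exists_eq_one_sub_mul_of_mem_one_sub_smul (Complex.ofReal_ne_zero.mpr hδ.ne') hμ
  refine Complex.norm_one_sub_ofReal_mul_lt_one hδ ?_
  have hνR : ‖ν‖ ^ 2 ≤ R ^ 2 := pow_le_pow_left₀ (norm_nonneg _) (hR ν hν) 2
  calc r / (R ^ 2 + 1) * ‖ν‖ ^ 2 ≤ r / (R ^ 2 + 1) * R ^ 2 := by gcongr
    _ < r := by rw [div_mul_eq_mul_div, div_lt_iff₀ (by positivity)]; nlinarith
    _ < 2 * ν.re := by linarith [hre ν hν]

theorem exists_pow_norm_lt_one (a : A) (h : ∀ μ ∈ spectrum ℂ a, ‖μ‖ < 1) :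
    ∃ m : ℕ, 0 < m ∧ ‖a ^ m‖ < 1 := by
  have hrad : spectralRadius ℂ a < 1 := by
    rcases (spectrum ℂ a).eq_empty_or_nonempty with he | hne
    · simp [spectralRadius, he]
    · exact_mod_cast spectralRadius_lt_of_forall_lt_of_nonempty hne (r := 1)
        fun μ hμ => by exact_mod_cast h μ hμ
  obtain ⟨m, hm, hm0⟩ := ((pow_nnnorm_pow_one_div_tendsto_nhds_spectralRadius a).eventually_lt_const
    hrad |>.and (eventually_gt_atTop 0)).exists
  refine ⟨m, hm0, ?_⟩
  have : (‖a ^ m‖₊ : ENNReal) < 1 := by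
    by_contra! h1
    exact hm.not_ge (ENNReal.one_le_rpow h1 (by positivity))
  exact_mod_cast this

end spectrum

theorem EuclideanSpace.norm_toLp_ofReal {ι : Type*} [Fintype ι] (x : ι → ℝ) :
    ‖toLp 2 (fun i => (x i : ℂ))‖ = ‖toLp 2 x‖ := by
  simp [EuclideanSpace.norm_eq]

namespace Matrix

variable {ι : Type*} [Fintype ι]

theorem dotProduct_self_nonneg (x : ι → ℝ) : 0 ≤ x ⬝ᵥ x := by
  simpa using dotProduct_star_self_nonneg x

theorem dotProduct_self_pos {x : ι → ℝ} (hx : x ≠ 0) : 0 < x ⬝ᵥ x := by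
  simpa using dotProduct_self_star_pos_iff.mpr hx

variable [DecidableEq ι]

theorem dotProduct_self_eq_norm_sq (x : ι → ℝ) : x ⬝ᵥ x = ‖toLp 2 x‖ ^ 2 := by
  simpa using (inner_toEuclideanCLM (1 : Matrix ι ι ℝ) (toLp 2 x) (toLp 2 x)).symm

theorem abs_dotProduct_mulVec_self_le (A : Matrix ι ι ℝ) (z : ι → ℝ) :
    |z ⬝ᵥ A *ᵥ z| ≤ ‖A‖ * (z ⬝ᵥ z) := by
  rw [← inner_toEuclideanCLM A (toLp 2 z) (toLp 2 z), dotProduct_self_eq_norm_sq]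
  calc _ ≤ ‖toLp 2 z‖ * ‖toEuclideanCLM (𝕜 := ℝ) (n := ι) A (toLp 2 z)‖ :=
        abs_real_inner_le_norm _ _
    _ ≤ ‖toLp 2 z‖ * (‖A‖ * ‖toLp 2 z‖) := by
        gcongr; exact (toEuclideanCLM (𝕜 := ℝ) (n := ι) A).le_opNorm _
    _ = ‖A‖ * ‖toLp 2 z‖ ^ 2 := by ring

theorem mulVec_dotProduct_mulVec_le (A : Matrix ι ι ℝ) (z : ι → ℝ) :
    (A *ᵥ z) ⬝ᵥ (A *ᵥ z) ≤ ‖A‖ ^ 2 * (z ⬝ᵥ z) := by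
  rw [dotProduct_self_eq_norm_sq, dotProduct_self_eq_norm_sq, ← mul_pow]
  exact pow_le_pow_left₀ (norm_nonneg _) (l2_opNorm_mulVec A (toLp 2 z)) 2

theorem l2_opNorm_le_l2_opNorm_map_ofReal (A : Matrix ι ι ℝ) :
    ‖A‖ ≤ ‖A.map Complex.ofReal‖ := by
  refine ContinuousLinearMap.opNorm_le_bound _ (norm_nonneg _) fun x => ?_
  change ‖toLp 2 (A *ᵥ x.ofLp)‖ ≤ _
  rw [← EuclideanSpace.norm_toLp_ofReal, ← EuclideanSpace.norm_toLp_ofReal x.ofLp]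
  have hmap : (fun i => ((A *ᵥ x.ofLp) i : ℂ)) = A.map Complex.ofReal *ᵥ fun i => (x i : ℂ) :=
    funext (RingHom.map_mulVec Complex.ofRealHom A x.ofLp)
  rw [hmap]
  exact l2_opNorm_mulVec (A.map Complex.ofReal) (toLp 2 fun i => (x i : ℂ))

def discreteGramian (C : Matrix ι ι ℝ) (m : ℕ) : Matrix ι ι ℝ :=
  ∑ j ∈ Finset.range m, (C ^ j)ᵀ * C ^ j

section discreteGramian

variable (C : Matrix ι ι ℝ) (m : ℕ)

theorem discreteGramian_isSymm : (discreteGramian C m).IsSymm := by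
  rw [IsSymm, discreteGramian, transpose_sum]
  simp

theorem dotProduct_discreteGramian_mulVec (z : ι → ℝ) :
    z ⬝ᵥ discreteGramian C m *ᵥ z = ∑ j ∈ Finset.range m, (C ^ j *ᵥ z) ⬝ᵥ (C ^ j *ᵥ z) := by
  simp only [discreteGramian, sum_mulVec, dotProduct_sum]
  refine Finset.sum_congr rfl fun j _ => ?_
  rw [← mulVec_mulVec, dotProduct_mulVec, vecMul_transpose]

theorem dotProduct_discreteGramian_mulVec_nonneg (z : ι → ℝ) :
    0 ≤ z ⬝ᵥ discreteGramian C m *ᵥ z := by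
  rw [dotProduct_discreteGramian_mulVec]
  exact Finset.sum_nonneg fun j _ => dotProduct_self_nonneg _

theorem dotProduct_discreteGramian_mulVec_pos {m : ℕ} (hm : 0 < m) {z : ι → ℝ} (hz : z ≠ 0) :
    0 < z ⬝ᵥ discreteGramian C m *ᵥ z := by
  rw [dotProduct_discreteGramian_mulVec]
  exact Finset.sum_pos' (fun j _ => dotProduct_self_nonneg _)
    ⟨0, Finset.mem_range.mpr hm, by simpa using dotProduct_self_pos hz⟩

theorem dotProduct_discreteGramian_mulVec_sub (z : ι → ℝ) :
    z ⬝ᵥ discreteGramian C m *ᵥ z - (C *ᵥ z) ⬝ᵥ discreteGramian C m *ᵥ (C *ᵥ z) =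
      z ⬝ᵥ z - (C ^ m *ᵥ z) ⬝ᵥ (C ^ m *ᵥ z) := by
  rw [dotProduct_discreteGramian_mulVec, dotProduct_discreteGramian_mulVec]
  simp only [mulVec_mulVec, ← pow_succ]
  rw [← Finset.sum_sub_distrib, Finset.sum_range_sub' (fun j => (C ^ j *ᵥ z) ⬝ᵥ (C ^ j *ᵥ z))]
  simp

end discreteGramian

theorem dotProduct_mulVec_sub_one_sub_smul {H : Matrix ι ι ℝ} (hH : H.IsSymm)
    (A : Matrix ι ι ℝ) (δ : ℝ) (z : ι → ℝ) :
    z ⬝ᵥ H *ᵥ z - ((1 - δ • A) *ᵥ z) ⬝ᵥ H *ᵥ ((1 - δ • A) *ᵥ z) =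
      2 * δ * (z ⬝ᵥ (H * A) *ᵥ z) - δ ^ 2 * ((A *ᵥ z) ⬝ᵥ H *ᵥ (A *ᵥ z)) := by
  have hsymm : (A *ᵥ z) ⬝ᵥ H *ᵥ z = z ⬝ᵥ H *ᵥ (A *ᵥ z) := by
    rw [dotProduct_mulVec, ← mulVec_transpose, hH, dotProduct_comm]
  simp only [sub_mulVec, smul_mulVec, one_mulVec, mulVec_sub, mulVec_smul, sub_dotProduct,
    dotProduct_sub, smul_dotProduct, dotProduct_smul, smul_eq_mul, ← mulVec_mulVec, hsymm]
  ring

theorem exists_lyapunov_of_forall_re_pos (A : Matrix ι ι ℝ)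
    (hA : ∀ μ ∈ spectrum ℂ (A.map Complex.ofReal), 0 < μ.re) :
    ∃ H : Matrix ι ι ℝ, H.IsSymm ∧ (∀ z, z ≠ 0 → 0 < z ⬝ᵥ H *ᵥ z) ∧
      ∃ α : ℝ, 0 < α ∧ ∀ z, α * (z ⬝ᵥ z) ≤ z ⬝ᵥ (H * A) *ᵥ z := by
  obtain ⟨δ, hδ, hspec⟩ := spectrum.exists_norm_lt_one_on_spectrum_one_sub_smul _ hA
  set C := 1 - δ • A
  have hCmap : C.map Complex.ofReal = 1 - (δ : ℂ) • A.map Complex.ofReal := by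
    ext i j
    simp [C, Matrix.one_apply, apply_ite]
  obtain ⟨m, hm, hc⟩ := spectrum.exists_pow_norm_lt_one _ (hCmap ▸ hspec)
  set c := ‖(C.map Complex.ofReal) ^ m‖
  have hcontr (z : ι → ℝ) : (C ^ m *ᵥ z) ⬝ᵥ (C ^ m *ᵥ z) ≤ c ^ 2 * (z ⬝ᵥ z) := by
    have hCm : ‖C ^ m‖ ≤ c := by
      refine (l2_opNorm_le_l2_opNorm_map_ofReal _).trans_eq ?_
      rw [show (C ^ m).map Complex.ofReal = Complex.ofRealHom.mapMatrix (C ^ m) from rfl, map_pow]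
      rfl
    exact (mulVec_dotProduct_mulVec_le _ z).trans (by gcongr; exact dotProduct_self_nonneg z)
  refine ⟨discreteGramian C m, discreteGramian_isSymm C m,
    fun z hz => dotProduct_discreteGramian_mulVec_pos C hm hz, (1 - c ^ 2) / (2 * δ), ?_,
    fun z => ?_⟩
  · have : 0 ≤ c := norm_nonneg _
    exact div_pos (by nlinarith) (by positivity)
  have h1 := dotProduct_mulVec_sub_one_sub_smul (discreteGramian_isSymm C m) A δ z
  have h2 := dotProduct_discreteGramian_mulVec_sub C m z
  have h3 := dotProduct_discreteGramian_mulVec_nonneg C m (A *ᵥ z)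
  rw [div_mul_eq_mul_div, div_le_iff₀ (by positivity)]
  nlinarith [hcontr z, mul_nonneg (sq_nonneg δ) h3]

end Matrix

theorem posDefMat_mul_add_smul {n : ℕ} {H A B : Matrix (Fin n) (Fin n) ℝ} {α ε : ℝ}
    (hα : ∀ z, α * (z ⬝ᵥ z) ≤ z ⬝ᵥ (H * A) *ᵥ z) (hε : 0 ≤ ε) (hεα : ε * (‖H‖ * ‖B‖) < α) :
    PosDefMat (H * (A + ε • B)) := by
  intro z hz
  have hzz := dotProduct_self_pos hz
  have hpert : -(ε * (‖H‖ * ‖B‖)) * (z ⬝ᵥ z) ≤ ε * (z ⬝ᵥ (H * B) *ᵥ z) := by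
    have := neg_le_of_abs_le ((abs_dotProduct_mulVec_self_le (H * B) z).trans
      (mul_le_mul_of_nonneg_right (l2_opNorm_mul H B) hzz.le))
    nlinarith
  rw [mul_add, add_mulVec, Matrix.mul_smul, smul_mulVec, dotProduct_add, dotProduct_smul,
    smul_eq_mul]
  nlinarith [hα z, mul_lt_mul_of_pos_right hεα hzz]

/-- Perturbations of constant normally elliptic diffusion matrices: there exist
a symmetric positive definite `H` and `ε₀ > 0` such that `H·(A₀ + ε·B)` is
positive definite for every `0 < ε < ε₀` and every `B` with `‖B‖ ≤ M`. -/
theorem entropyStructure_of_perturbed_const {n : ℕ}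
    (A₀ : Matrix (Fin n) (Fin n) ℝ) (hA₀ : NormallyElliptic A₀)
    (M : ℝ) (hM : 0 ≤ M) :
    ∃ H : Matrix (Fin n) (Fin n) ℝ, H.IsSymm ∧ PosDefMat H ∧
      ∃ ε₀ : ℝ, 0 < ε₀ ∧
        ∀ ε : ℝ, 0 < ε → ε < ε₀ →
          ∀ B : Matrix (Fin n) (Fin n) ℝ, matOpNorm B ≤ M →
            PosDefMat (H * (A₀ + ε • B)) := by
  obtain ⟨H, hHsymm, hHpos, α, hα, hcoer⟩ := exists_lyapunov_of_forall_re_pos A₀ hA₀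
  have hK : 0 < ‖H‖ * M + 1 := add_pos_of_nonneg_of_pos (mul_nonneg (norm_nonneg H) hM) one_pos
  refine ⟨H, hHsymm, hHpos, α / (‖H‖ * M + 1), div_pos hα hK,
    fun ε hε hεlt B hB => posDefMat_mul_add_smul hcoer hε.le ?_⟩
  rw [lt_div_iff₀ hK] at hεlt
  calc ε * (‖H‖ * ‖B‖) ≤ ε * (‖H‖ * M) := by gcongr; exact hB
    _ < α := by linarith
end

section
/- Let π₁,…,πₙ > 0 and u₁,…,uₙ > 0 be real numbers, and let Q ∈ ℝ^{n×n} be a normally elliptic matrix satisfying the detailed-balance condition πᵢ·Q_{ij} = πⱼ·Q_{ji} for all i ≠ j. Define the diffusion matrix A by A_{ij} = uᵢ·Q_{ij} and the Hessian matrix H = diag(π₁/u₁,…,πₙ/uₙ). Then H·A, whose entries are (H·A)_{ij} = πᵢ·Q_{ij}, is symmetric positive definite. (This is the entropy structure of the fluid mixture model ∂ₜuᵢ = div(uᵢ∇pᵢ(u)) with Q_{ij} = ∂pᵢ/∂uⱼ and Boltzmann-type entropy density h(u) = Σᵢ πᵢuᵢ(log uᵢ − 1), whose Hessian is H.) -/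
/-!
Symmetrize `Q` with `D = diag(√πᵢ)`: the matrix `S = D Q D⁻¹ = D⁻¹ (diag π · Q) D⁻¹` is similar
to `Q`, so its eigenvalues are those of `Q` and hence positive, and it is symmetric because detailed
balance says exactly that `diag π · Q` is. A symmetric matrix with positive spectrum is positive
definite, and so is its congruent `diag π · Q = D S D`, which is `H A`.
-/

open Matrix

namespace Matrix

variable {ι : Type*} [Fintype ι] [DecidableEq ι]

def DetailedBalance (π : ι → ℝ) (Q : Matrix ι ι ℝ) : Prop :=
  ∀ i j, i ≠ j → π i * Q i j = π j * Q j i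

theorem DetailedBalance.isSymm_diagonal_mul {π : ι → ℝ} {Q : Matrix ι ι ℝ}
    (h : DetailedBalance π Q) : (diagonal π * Q).IsSymm := by
  ext i j
  rcases eq_or_ne j i with rfl | hji
  · rfl
  · simpa [diagonal_mul] using h j i hji

theorem diagonal_div_mul_of_mul {π u : ι → ℝ} (hu : ∀ i, u i ≠ 0) (Q : Matrix ι ι ℝ) :
    diagonal (fun i => π i / u i) * of (fun i j => u i * Q i j) = diagonal π * Q := by
  ext i j
  simp only [diagonal_mul, of_apply]
  field_simp [hu i]

theorem ofReal_mem_spectrum_map {A : Matrix ι ι ℝ} {μ : ℝ} (h : μ ∈ spectrum ℝ A) :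
    (μ : ℂ) ∈ spectrum ℂ (A.map Complex.ofReal) := by
  rw [mem_spectrum_iff_isRoot_charpoly] at h ⊢
  have hμ := h.map (f := Complex.ofRealHom)
  rw [← charpoly_map] at hμ
  exact hμ

theorem IsHermitian.posDef_of_spectrum_pos {S : Matrix ι ι ℝ} (hS : S.IsHermitian)
    (h : ∀ μ ∈ spectrum ℝ S, 0 < μ) : S.PosDef :=
  hS.posDef_iff_eigenvalues_pos.mpr fun i => h _ (hS.eigenvalues_mem_spectrum_real i)

theorem posDef_diagonal_mul_of_isSymm {π : ι → ℝ} (hπ : ∀ i, 0 < π i) {Q : Matrix ι ι ℝ}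
    (hsymm : (diagonal π * Q).IsSymm) (hspec : ∀ μ ∈ spectrum ℝ Q, 0 < μ) :
    (diagonal π * Q).PosDef := by
  have hsqrt : ∀ i, √(π i) ≠ 0 := fun i => (Real.sqrt_pos.mpr (hπ i)).ne'
  set D : Matrix ι ι ℝ := diagonal fun i => √(π i)
  set E : Matrix ι ι ℝ := diagonal fun i => (√(π i))⁻¹
  have hDE : D * E = 1 := by simp [D, E, diagonal_mul_diagonal, hsqrt]
  have hED : E * D = 1 := by simp [D, E, diagonal_mul_diagonal, hsqrt]
  have hπD : diagonal π = D * D := by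
    simp [D, diagonal_mul_diagonal, Real.mul_self_sqrt (hπ _).le]
  have hE : star E = E := by simp [E, star_eq_conjTranspose]
  have hconj : E * (diagonal π * Q) * E = D * Q * E := by
    rw [hπD, mul_assoc D, ← mul_assoc E, hED, one_mul]
  rw [← Matrix.IsUnit.posDef_star_left_conjugate_iff ⟨⟨E, D, hED, hDE⟩, rfl⟩, hE, hconj]
  refine IsHermitian.posDef_of_spectrum_pos ?_ ?_
  · have h := isHermitian_conjTranspose_mul_mul E (isHermitian_iff_isSymm.mpr hsymm)
    rwa [← star_eq_conjTranspose, hE, hconj] at h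
  · have h := spectrum.units_conjugate (R := ℝ) (a := Q) (u := ⟨D, E, hDE, hED⟩)
    rw [Units.inv_mk, Units.val_mk, Units.val_mk] at h
    rwa [h]

theorem PosDef.posDefMat {n : ℕ} {M : Matrix (Fin n) (Fin n) ℝ} (hM : M.PosDef) :
    PosDefMat M :=
  fun _ hz => hM.dotProduct_mulVec_pos hz

end Matrix

theorem NormallyElliptic.pos_of_mem_spectrum_s13 {n : ℕ} {Q : Matrix (Fin n) (Fin n) ℝ}
    (hQ : NormallyElliptic Q) {μ : ℝ} (hμ : μ ∈ spectrum ℝ Q) : 0 < μ := by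
  simpa using hQ _ (Matrix.ofReal_mem_spectrum_map hμ)

/-- Entropy structure of the fluid mixture model driven by partial pressure
gradients: if `Q = (∂pᵢ/∂uⱼ)` is normally elliptic and satisfies the
detailed-balance condition, then `H·A = (πᵢ·Q_{ij})` is symmetric positive
definite, where `A_{ij} = uᵢ·Q_{ij}` and `H = diag(πᵢ/uᵢ)`. -/
theorem fluidMixture_entropyStructure {n : ℕ}
    (π u : Fin n → ℝ) (hπ : ∀ i, 0 < π i) (hu : ∀ i, 0 < u i)
    (Q : Matrix (Fin n) (Fin n) ℝ) (hQ : NormallyElliptic Q)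
    (hdb : ∀ i j, i ≠ j → π i * Q i j = π j * Q j i) :
    (Matrix.diagonal (fun i => π i / u i) *
        Matrix.of (fun i j => u i * Q i j)).IsSymm ∧
      PosDefMat (Matrix.diagonal (fun i => π i / u i) *
        Matrix.of (fun i j => u i * Q i j)) := by
  rw [diagonal_div_mul_of_mul (fun i => (hu i).ne')]
  have hsymm := DetailedBalance.isSymm_diagonal_mul hdb
  have hspec : ∀ μ ∈ spectrum ℝ Q, 0 < μ := fun _ => hQ.pos_of_mem_spectrum_s13
  exact ⟨hsymm, (posDef_diagonal_mul_of_isSymm hπ hsymm hspec).posDefMat⟩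
end

section
/- Let π₁,…,πₙ > 0 and u₁,…,uₙ > 0 be real numbers, and let Q ∈ ℝ^{n×n} be an invertible matrix satisfying the detailed-balance condition πᵢ·Q_{ij} = πⱼ·Q_{ji} for all i ≠ j. Then the matrix M = diag(π)·Q·diag(u)·Q, whose entries are M_{ij} = Σₖ πᵢ·Q_{ik}·uₖ·Q_{kj}, is symmetric positive definite. (This is the entropy structure of the fluid mixture model ∂ₜuᵢ = div(uᵢ∇pᵢ(u)) with Q_{ij} = ∂pᵢ/∂uⱼ for the second, pressure-based entropy density h with ∂h/∂uᵢ = πᵢpᵢ, whose Hessian is diag(π)·Q.) -/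
open Matrix

/-- Second entropy for the fluid mixture model: if `Q` is invertible and
satisfies the detailed-balance condition, then
`M = diag(π)·Q·diag(u)·Q` is symmetric positive definite. -/
theorem fluidMixture_second_entropy {n : ℕ}
    (π u : Fin n → ℝ) (hπ : ∀ i, 0 < π i) (hu : ∀ i, 0 < u i)
    (Q : Matrix (Fin n) (Fin n) ℝ) (hQ : IsUnit Q.det)
    (hdb : ∀ i j, i ≠ j → π i * Q i j = π j * Q j i) :
    (Matrix.diagonal π * Q * Matrix.diagonal u * Q).IsSymm ∧
      PosDefMat (Matrix.diagonal π * Q * Matrix.diagonal u * Q) := by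
  set S : Matrix (Fin n) (Fin n) ℝ := Matrix.diagonal π * Q with hSdef
  have hS : Sᵀ = S := by
    ext i j
    simp only [hSdef, transpose_apply, diagonal_mul]
    rcases eq_or_ne j i with rfl | h
    · rfl
    · exact hdb j i h
  set a : Fin n → ℝ := fun i => u i * (π i)⁻¹ with ha
  have hapos : ∀ i, 0 < a i := fun i => mul_pos (hu i) (inv_pos.2 (hπ i))
  have h1 : Matrix.diagonal a * Matrix.diagonal π = Matrix.diagonal u := by
    have h2 : (fun i => a i * π i) = u := by
      funext i
      rw [ha]
      exact inv_mul_cancel_right₀ (hπ i).ne' (u i)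
    rw [diagonal_mul_diagonal, h2]
  have hM : Matrix.diagonal π * Q * Matrix.diagonal u * Q
      = S * Matrix.diagonal a * S := by
    rw [hSdef]
    simp only [mul_assoc]
    rw [← mul_assoc (Matrix.diagonal a), h1]
  have hSu : IsUnit S := by
    rw [Matrix.isUnit_iff_isUnit_det, hSdef, det_mul, det_diagonal]
    exact ((IsUnit.mk0 _ (Finset.prod_pos (fun i _ => hπ i)).ne')).mul hQ
  clear_value S a
  rw [← hSdef] at hM
  rw [hM]
  constructor
  · unfold Matrix.IsSymm
    rw [transpose_mul, transpose_mul, hS, diagonal_transpose, mul_assoc]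
  · intro z hz
    have hSz : S.mulVec z ≠ 0 := by
      have hinj := Matrix.mulVec_injective_iff_isUnit.mpr hSu
      intro h
      exact hz (hinj (by simpa [Matrix.mulVec_zero] using h))
    set y := S.mulVec z with hy
    have key : z ⬝ᵥ (S * Matrix.diagonal a * S).mulVec z
        = ∑ i, y i * (a i * y i) := by
      rw [← Matrix.mulVec_mulVec, ← Matrix.mulVec_mulVec, Matrix.dotProduct_mulVec,
        ← Matrix.mulVec_transpose, hS, ← hy]
      simp [dotProduct, Matrix.mulVec_diagonal]
    rw [key]
    obtain ⟨i, hi⟩ : ∃ i, y i ≠ 0 := by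
      by_contra h
      push_neg at h
      exact hSz (funext h)
    apply Finset.sum_pos' (fun j _ => by nlinarith [sq_nonneg (y j), (hapos j).le, sq_nonneg (y j * a j)])
    exact ⟨i, Finset.mem_univ i, by nlinarith [mul_pos (hapos i) (mul_self_pos.mpr hi)]⟩
end

section
/- Let π₁,…,πₙ > 0, u₁,…,uₙ > 0, and p₁,…,pₙ > 0 be real numbers, and let Q ∈ ℝ^{n×n} be a normally elliptic matrix satisfying the detailed-balance condition πᵢ·Q_{ij} = πⱼ·Q_{ji} for all i ≠ j. Define the diffusion matrix A of the general SKT population model by A_{ij} = δ_{ij}·pᵢ + uᵢ·Q_{ij}, and the Hessian matrix H = diag(π₁/u₁,…,πₙ/uₙ). Then H·A, whose entries are (H·A)_{ij} = δ_{ij}·πᵢpᵢ/uᵢ + πᵢ·Q_{ij}, is symmetric positive definite. (This is the entropy structure of the model ∂ₜuᵢ = Δ(uᵢpᵢ(u)) with Q_{ij} = ∂pᵢ/∂uⱼ and entropy density h(u) = Σᵢ πᵢuᵢ(log uᵢ − 1).) -/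
open Matrix

/-!
Detailed balance says that `S = diag(π) Q` is symmetric. Conjugating `Q` by `D = diag(√π)` gives
`T = D Q D⁻¹ = D⁻¹ S D⁻¹`, which is symmetric and has the spectrum of `Q`; so its (real)
eigenvalues are positive and `T`, hence `S = D T D`, is positive definite. Finally
`H A = diag(πᵢ pᵢ / uᵢ) + S` is a positive diagonal matrix plus a positive definite one.
-/

theorem Matrix.map_mem_spectrum_map {ι K L : Type*} [Fintype ι] [DecidableEq ι] [Field K]
    [Field L] (f : K →+* L) (A : Matrix ι ι K) {r : K} (hr : r ∈ spectrum K A) :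
    f r ∈ spectrum L (A.map f) := by
  rw [mem_spectrum_iff_isRoot_charpoly] at hr ⊢
  rw [charpoly_map]
  exact hr.map

namespace NormallyElliptic

variable {n : ℕ} {Q : Matrix (Fin n) (Fin n) ℝ}

theorem conj (hQ : NormallyElliptic Q) {P : Matrix (Fin n) (Fin n) ℝ} (hP : IsUnit P) :
    NormallyElliptic (P * Q * P⁻¹) := by
  lift P to (Matrix (Fin n) (Fin n) ℝ)ˣ using hP
  let φ : Matrix (Fin n) (Fin n) ℝ →+* Matrix (Fin n) (Fin n) ℂ :=
    Complex.ofRealHom.mapMatrix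
  let U : (Matrix (Fin n) (Fin n) ℂ)ˣ := Units.map φ.toMonoidHom P
  have hmap : (P * Q * (P : Matrix (Fin n) (Fin n) ℝ)⁻¹).map Complex.ofReal =
      U * Q.map Complex.ofReal * (U⁻¹ : (Matrix (Fin n) (Fin n) ℂ)ˣ) := by
    rw [← coe_units_inv, Units.coe_map, Units.coe_map_inv]
    exact (map_mul φ _ _).trans (congrArg (· * _) (map_mul φ _ _))
  intro μ hμ
  rw [hmap, spectrum.units_conjugate] at hμ
  exact hQ μ hμ

theorem posDef_of_isSymm (hQ : NormallyElliptic Q) (hsymm : Q.IsSymm) : Q.PosDef := by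
  have hherm : Q.IsHermitian := isHermitian_iff_isSymm.mpr hsymm
  refine hherm.posDef_iff_eigenvalues_pos.mpr fun i => ?_
  simpa using hQ _ <|
    map_mem_spectrum_map Complex.ofRealHom Q (hherm.eigenvalues_mem_spectrum_real i)

end NormallyElliptic

theorem posDef_diagonal_mul_of_detailed_balance {n : ℕ} {π : Fin n → ℝ}
    (hπ : ∀ i, 0 < π i) {Q : Matrix (Fin n) (Fin n) ℝ} (hQ : NormallyElliptic Q)
    (hdb : ∀ i j, i ≠ j → π i * Q i j = π j * Q j i) :
    (diagonal π * Q).PosDef := by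
  set d : Fin n → ℝ := fun i => √(π i)
  have hd : ∀ i, 0 < d i := fun i => Real.sqrt_pos.mpr (hπ i)
  have hdd : ∀ i, d i * d i = π i := fun i => Real.mul_self_sqrt (hπ i).le
  have hD : IsUnit (diagonal d) :=
    isUnit_diagonal.mpr <| Pi.isUnit_iff.mpr fun i => (hd i).ne'.isUnit
  have hDinv : (diagonal d)⁻¹ = diagonal fun i => (d i)⁻¹ := by
    refine inv_eq_right_inv ?_
    simp [diagonal_mul_diagonal, fun i => mul_inv_cancel₀ (hd i).ne']
  set T := diagonal d * Q * (diagonal d)⁻¹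
  have hT : ∀ i j, T i j = d i * Q i j / d j := by
    intro i j
    simp [T, hDinv, mul_diagonal, diagonal_mul, div_eq_mul_inv]
  have hTsymm : T.IsSymm := by
    refine IsSymm.ext fun i j => ?_
    rcases eq_or_ne i j with rfl | hij
    · rfl
    rw [hT, hT, div_eq_div_iff (hd i).ne' (hd j).ne']
    calc d j * Q j i * d j = π j * Q j i := by rw [← hdd j]; ring
      _ = π i * Q i j := (hdb i j hij).symm
      _ = d i * Q i j * d i := by rw [← hdd i]; ring
  have hS : diagonal π * Q = star (diagonal d) * T * diagonal d := by
    ext i j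
    simp [star_eq_conjTranspose, hT, mul_diagonal, diagonal_mul, ← hdd i,
      div_mul_cancel₀ _ (hd j).ne', mul_assoc]
  rw [hS, hD.posDef_star_left_conjugate_iff]
  exact (hQ.conj hD).posDef_of_isSymm hTsymm

theorem Matrix.PosDef.posDefMat_s15 {n : ℕ} {M : Matrix (Fin n) (Fin n) ℝ} (hM : M.PosDef) :
    PosDefMat M := fun z hz => by
  simpa using hM.dotProduct_mulVec_pos hz

/-- Entropy structure of the general SKT population model: with
`A_{ij} = δ_{ij}·pᵢ + uᵢ·Q_{ij}` and `H = diag(πᵢ/uᵢ)`, the matrix `H·A` is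
symmetric positive definite provided `Q` is normally elliptic and satisfies
the detailed-balance condition. -/
theorem generalSKT_entropyStructure {n : ℕ}
    (π u p : Fin n → ℝ) (hπ : ∀ i, 0 < π i) (hu : ∀ i, 0 < u i)
    (hp : ∀ i, 0 < p i)
    (Q : Matrix (Fin n) (Fin n) ℝ) (hQ : NormallyElliptic Q)
    (hdb : ∀ i j, i ≠ j → π i * Q i j = π j * Q j i) :
    (Matrix.diagonal (fun i => π i / u i) *
        Matrix.of (fun i j => (if i = j then p i else 0) + u i * Q i j)).IsSymm ∧
      PosDefMat (Matrix.diagonal (fun i => π i / u i) *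
        Matrix.of (fun i j => (if i = j then p i else 0) + u i * Q i j)) := by
  have hHA : diagonal (fun i => π i / u i) *
        of (fun i j => (if i = j then p i else 0) + u i * Q i j) =
      diagonal (fun i => π i * p i / u i) + diagonal π * Q := by
    ext i j
    have hui := (hu i).ne'
    rcases eq_or_ne i j with rfl | hij
    · simp only [diagonal_mul, of_apply, ↓reduceIte, Matrix.add_apply, diagonal_apply_eq]
      field_simp
    · simp only [diagonal_mul, of_apply, hij, ↓reduceIte, zero_add, Matrix.add_apply,
        diagonal_apply_ne _ hij]
      field_simp
  have hpos : (diagonal (fun i => π i * p i / u i) + diagonal π * Q).PosDef :=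
    (posDef_diagonal_iff.mpr fun i => div_pos (mul_pos (hπ i) (hp i)) (hu i)).add
      (posDef_diagonal_mul_of_detailed_balance hπ hQ hdb)
  rw [hHA]
  exact ⟨isHermitian_iff_isSymm.mp hpos.isHermitian, hpos.posDefMat_s15⟩
end

section
/- Let n ≥ 1 and let a_{i0} ≥ 0 and a_{ij} ≥ 0 (for i, j = 1,…,n) be real numbers with a_{i0} + a_{ii} > 0 for every i. For u ∈ ℝⁿ with uᵢ > 0 for all i, define the SKT diffusion matrix A(u) ∈ ℝ^{n×n} by A_{ii}(u) = a_{i0} + 2a_{ii}uᵢ + Σ_{j≠i} a_{ij}uⱼ and A_{ij}(u) = a_{ij}uᵢ for i ≠ j. Then A(u) is normally elliptic for every such u. -/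
open Matrix

/-- The diffusion matrix of the `n`-species SKT population model
(`A_{ii} = a_{i0} + 2a_{ii}uᵢ + Σ_{j≠i} a_{ij}uⱼ`, `A_{ij} = a_{ij}uᵢ` for
`i ≠ j`) is normally elliptic provided `a_{i0}, a_{ij} ≥ 0` and
`a_{i0} + a_{ii} > 0`. Note that
`(if i = j then a_{i0} + Σₖ a_{ik}uₖ else 0) + a_{ij}uᵢ` coincides with these
entries. -/
theorem skt_normallyElliptic {n : ℕ} (hn : 1 ≤ n)
    (a₀ : Fin n → ℝ) (a : Fin n → Fin n → ℝ)
    (ha₀ : ∀ i, 0 ≤ a₀ i) (ha : ∀ i j, 0 ≤ a i j)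
    (hdiag : ∀ i, 0 < a₀ i + a i i)
    (u : Fin n → ℝ) (hu : ∀ i, 0 < u i) :
    NormallyElliptic (Matrix.of fun i j =>
      (if i = j then a₀ i + ∑ k, a i k * u k else 0) + a i j * u i) := by
  intro μ hμ
  set M : Matrix (Fin n) (Fin n) ℂ := (Matrix.of fun i j =>
      (if i = j then a₀ i + ∑ k, a i k * u k else 0) + a i j * u i).map Complex.ofReal with hM
  set D : Matrix (Fin n) (Fin n) ℂ := Matrix.diagonal fun i => (u i : ℂ) with hD
  set D' : Matrix (Fin n) (Fin n) ℂ := Matrix.diagonal fun i => ((u i : ℂ))⁻¹ with hD'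
  have hune : ∀ i, (u i : ℂ) ≠ 0 := fun i => by
    exact_mod_cast (hu i).ne'
  have hDD' : D * D' = 1 := by
    rw [hD, hD', Matrix.diagonal_mul_diagonal,
      show (fun i => (u i : ℂ) * ((u i : ℂ))⁻¹) = fun _ => 1 from
        funext fun i => mul_inv_cancel₀ (hune i), Matrix.diagonal_one]
  have hD'D : D' * D = 1 := by
    rw [hD, hD', Matrix.diagonal_mul_diagonal,
      show (fun i => ((u i : ℂ))⁻¹ * (u i : ℂ)) = fun _ => 1 from
        funext fun i => inv_mul_cancel₀ (hune i), Matrix.diagonal_one]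
  set w : (Matrix (Fin n) (Fin n) ℂ)ˣ := ⟨D, D', hDD', hD'D⟩ with hw
  have hspec : spectrum ℂ (D' * M * D) = spectrum ℂ M := by
    have := spectrum.units_conjugate' (R := ℂ) (a := M) (u := w)
    simpa [hw] using this
  set B : Matrix (Fin n) (Fin n) ℂ := D' * M * D with hB
  have hμB : μ ∈ spectrum ℂ B := by rw [hB, hspec]; exact hμ
  have hBij : ∀ i j, B i j = ((u i : ℂ))⁻¹ * M i j * (u j : ℂ) := by
    intro i j
    rw [hB, hD, hD', Matrix.mul_diagonal, Matrix.diagonal_mul]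
  -- off-diagonal entries
  have hBoff : ∀ i j, i ≠ j → B i j = ((a i j * u j : ℝ) : ℂ) := by
    intro i j hij
    rw [hBij, hM]
    simp only [Matrix.map_apply, Matrix.of_apply, if_neg hij, zero_add]
    push_cast
    field_simp [hune i]
  have hBdiag : ∀ i, B i i = ((a₀ i + ∑ k, a i k * u k + a i i * u i : ℝ) : ℂ) := by
    intro i
    rw [hBij, hM]
    simp only [Matrix.map_apply, Matrix.of_apply, if_pos rfl, if_true]
    push_cast
    field_simp [hune i]
  -- Gershgorin
  have heig : Module.End.HasEigenvalue (Matrix.toLin' B) μ := by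
    rw [Module.End.hasEigenvalue_iff_mem_spectrum]
    have hcoe : Matrix.toLin' (R := ℂ) (n := Fin n) B = Matrix.toLinAlgEquiv' B := rfl
    rw [hcoe, AlgEquiv.spectrum_eq (Matrix.toLinAlgEquiv' (R := ℂ) (n := Fin n)) B]
    exact hμB
  obtain ⟨k, hk⟩ := eigenvalue_mem_ball heig
  rw [Metric.mem_closedBall, dist_eq_norm] at hk
  have hradius : (∑ j ∈ Finset.univ.erase k, ‖B k j‖) = ∑ j ∈ Finset.univ.erase k, a k j * u j := by
    refine Finset.sum_congr rfl fun j hj => ?_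
    rw [hBoff k j (Finset.ne_of_mem_erase hj).symm]
    rw [Complex.norm_real, Real.norm_of_nonneg (mul_nonneg (ha k j) (hu j).le)]
  set c : ℝ := a₀ k + ∑ j, a k j * u j + a k k * u k with hc
  have hrebound : c - μ.re ≤ ‖μ - B k k‖ := by
    rw [hBdiag k, ← hc]
    have h2 : (μ - (c : ℂ)).re = μ.re - c := by simp
    calc c - μ.re = -((μ - (c : ℂ)).re) := by rw [h2]; ring
      _ ≤ |(μ - (c : ℂ)).re| := neg_le_abs _
      _ ≤ ‖μ - (c : ℂ)‖ := Complex.abs_re_le_norm _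
  have hsum : ∑ j ∈ Finset.univ.erase k, a k j * u j = (∑ j, a k j * u j) - a k k * u k := by
    rw [Finset.sum_erase_eq_sub (Finset.mem_univ k)]
  have hfinal : a₀ k + 2 * (a k k * u k) ≤ μ.re := by
    have := hrebound.trans (hk.trans_eq hradius)
    rw [hsum, hc] at this
    linarith
  have hpos : 0 < a₀ k + 2 * (a k k * u k) := by
    rcases eq_or_lt_of_le (ha k k) with h | h
    · have : 0 < a₀ k := by have := hdiag k; rw [← h] at this; linarith
      nlinarith [mul_nonneg (ha k k) (hu k).le]
    · nlinarith [mul_pos h (hu k), ha₀ k]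
  linarith
end

section
/- Let n ≥ 1 and let u₁,…,uₙ, p₁,…,pₙ, q₁,…,qₙ, q'₁,…,q'ₙ be positive real numbers, and let p'₁,…,p'ₙ be real numbers satisfying pᵢ + uᵢ·p'ᵢ > 0 for every i. Define the diffusion matrix A ∈ ℝ^{n×n} of the volume-filling model by A_{ij} = δ_{ij}·(pᵢqᵢ + uᵢqᵢp'ᵢ) + uᵢpᵢq'ᵢ (i.e., A_{ij} = δ_{ij}·pᵢqᵢ + uᵢpᵢq'ᵢ + δ_{ij}·uᵢqᵢp'ᵢ). Then A is normally elliptic and diagonalizable over ℝ with all eigenvalues real and positive. -/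
/-!
Write `aᵢ = qᵢ(pᵢ + uᵢp'ᵢ) > 0` and `lᵢ = uᵢpᵢq'ᵢ > 0`, so that `A = diag a + l 1ᵀ`.
Conjugating by `D = diag √l` gives `D⁻¹ A D = diag a + √l √lᵀ`, a symmetric positive definite
matrix; its orthogonal diagonalisation transfers to `A`, and the complex spectrum of a real
matrix similar to `diag d` is `{dᵢ}`.
-/

open Matrix

namespace Matrix

variable {ι : Type*} [Fintype ι] [DecidableEq ι]

lemma PosDef.exists_units_conj_diagonal {M : Matrix ι ι ℝ} (hM : M.PosDef) :
    ∃ (V : (Matrix ι ι ℝ)ˣ) (d : ι → ℝ),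
      (∀ i, 0 < d i) ∧ M = (V : Matrix ι ι ℝ) * diagonal d * (V : Matrix ι ι ℝ)⁻¹ := by
  refine ⟨Unitary.toUnits hM.isHermitian.eigenvectorUnitary, hM.isHermitian.eigenvalues,
    hM.eigenvalues_pos, ?_⟩
  conv_lhs => rw [hM.isHermitian.spectral_theorem, Unitary.conjStarAlgAut_apply]
  rw [← coe_units_inv]
  -- `RCLike.ofReal : ℝ → ℝ` is the identity by definition
  rfl

lemma diagonal_add_vecMulVec_mul_self_one_mul_diagonal {R : Type*} [CommRing R] (a b : ι → R) :
    (diagonal a + vecMulVec (b * b) 1) * diagonal b =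
      diagonal b * (diagonal a + vecMulVec b b) := by
  ext i j
  simp only [add_mul, mul_add, mul_diagonal, diagonal_mul, add_apply, diagonal_apply,
    vecMulVec_apply, Pi.mul_apply, Pi.one_apply]
  split_ifs with h
  · subst h; ring
  · ring

lemma posDef_diagonal_add_vecMulVec_self {a : ι → ℝ} (ha : ∀ i, 0 < a i) (b : ι → ℝ) :
    (diagonal a + vecMulVec b b).PosDef :=
  (PosDef.diagonal ha).add_posSemidef (posSemidef_vecMulVec_self_star b)

lemma exists_units_conj_diagonal_of_diagonal_add_vecMulVec {a l : ι → ℝ} (ha : ∀ i, 0 < a i)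
    (hl : ∀ i, 0 < l i) :
    ∃ (P : (Matrix ι ι ℝ)ˣ) (d : ι → ℝ), (∀ i, 0 < d i) ∧
      diagonal a + vecMulVec l 1 = (P : Matrix ι ι ℝ) * diagonal d * (P : Matrix ι ι ℝ)⁻¹ := by
  set b : ι → ℝ := fun i => √(l i)
  have hbb : b * b = l := funext fun i => Real.mul_self_sqrt (hl i).le
  have hb : IsUnit (diagonal b) :=
    isUnit_diagonal.2 <| Pi.isUnit_iff.2 fun i => (Real.sqrt_pos.2 (hl i)).ne'.isUnit
  obtain ⟨V, d, hd, hM⟩ := (posDef_diagonal_add_vecMulVec_self ha b).exists_units_conj_diagonal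
  refine ⟨hb.unit * V, d, hd, ?_⟩
  have hA := diagonal_add_vecMulVec_mul_self_one_mul_diagonal a b
  rw [hbb, ← hb.unit_spec, ← Units.eq_mul_inv_iff_mul_eq, hM] at hA
  simp only [hA, ← coe_units_inv, mul_inv_rev, Units.val_mul, mul_assoc]

lemma spectrum_map_units_conj_diagonal {K L : Type*} [Field K] [Field L] (f : K →+* L)
    (P : (Matrix ι ι K)ˣ) (d : ι → K) :
    spectrum L (((P : Matrix ι ι K) * diagonal d * (P : Matrix ι ι K)⁻¹).map f) =
      Set.range (f ∘ d) := by
  have h := spectrum.units_conjugate (R := L) (a := diagonal (f ∘ d))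
    (u := Units.map f.mapMatrix.toMonoidHom P)
  rw [spectrum_diagonal] at h
  convert h using 2
  rw [← coe_units_inv, ← RingHom.mapMatrix_apply, map_mul, map_mul,
    RingHom.mapMatrix_apply f (diagonal d), diagonal_map (map_zero f)]
  rfl

end Matrix

lemma normallyElliptic_units_conj_diagonal {n : ℕ} (P : (Matrix (Fin n) (Fin n) ℝ)ˣ)
    {d : Fin n → ℝ} (hd : ∀ i, 0 < d i) :
    NormallyElliptic ((P : Matrix (Fin n) (Fin n) ℝ) * diagonal d * (P : Matrix _ _ ℝ)⁻¹) := by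
  intro μ hμ
  obtain ⟨i, rfl⟩ : μ ∈ Set.range (Complex.ofRealHom ∘ d) := by
    rwa [← spectrum_map_units_conj_diagonal]
  exact hd i

theorem volumeFilling_normallyElliptic_and_diagonalizable_general {n : ℕ}
    (u p q q' : Fin n → ℝ) (p' : Fin n → ℝ)
    (hu : ∀ i, 0 < u i) (hp : ∀ i, 0 < p i)
    (hq : ∀ i, 0 < q i) (hq' : ∀ i, 0 < q' i)
    (hpp' : ∀ i, 0 < p i + u i * p' i) :
    NormallyElliptic (Matrix.of fun i j =>
      (if i = j then p i * q i + u i * q i * p' i else 0) + u i * p i * q' i) ∧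
    ∃ P Λ : Matrix (Fin n) (Fin n) ℝ,
      IsUnit P.det ∧ Λ.IsDiag ∧ (∀ i, 0 < Λ i i) ∧
      (Matrix.of fun i j =>
        (if i = j then p i * q i + u i * q i * p' i else 0) + u i * p i * q' i)
        = P * Λ * P⁻¹ := by
  have hA : (Matrix.of fun i j =>
      (if i = j then p i * q i + u i * q i * p' i else 0) + u i * p i * q' i) =
      diagonal (fun i => q i * (p i + u i * p' i)) + vecMulVec (fun i => u i * p i * q' i) 1 := by
    ext i j
    simp only [of_apply, Matrix.add_apply, diagonal_apply, vecMulVec_apply, Pi.one_apply, mul_one]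
    split_ifs <;> ring
  obtain ⟨P, d, hd, hPd⟩ := exists_units_conj_diagonal_of_diagonal_add_vecMulVec
    (fun i => mul_pos (hq i) (hpp' i)) (fun i => mul_pos (mul_pos (hu i) (hp i)) (hq' i))
  rw [hA, hPd]
  exact ⟨normallyElliptic_units_conj_diagonal P hd, P, diagonal d, P.isUnit.map detMonoidHom,
    isDiag_diagonal d, by simpa using hd, rfl⟩

/-- The diffusion matrix of the volume-filling model,
`A_{ij} = δ_{ij}(pᵢqᵢ + uᵢqᵢp'ᵢ) + uᵢpᵢq'ᵢ`, is normally elliptic and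
diagonalizable over ℝ with positive eigenvalues, provided
`uᵢ, pᵢ, qᵢ, q'ᵢ > 0` and `pᵢ + uᵢp'ᵢ > 0`. -/
theorem volumeFilling_normallyElliptic_and_diagonalizable {n : ℕ} (hn : 1 ≤ n)
    (u p q q' : Fin n → ℝ) (p' : Fin n → ℝ)
    (hu : ∀ i, 0 < u i) (hp : ∀ i, 0 < p i)
    (hq : ∀ i, 0 < q i) (hq' : ∀ i, 0 < q' i)
    (hpp' : ∀ i, 0 < p i + u i * p' i) :
    NormallyElliptic (Matrix.of fun i j =>
      (if i = j then p i * q i + u i * q i * p' i else 0) + u i * p i * q' i) ∧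
    ∃ P Λ : Matrix (Fin n) (Fin n) ℝ,
      IsUnit P.det ∧ Λ.IsDiag ∧ (∀ i, 0 < Λ i i) ∧
      (Matrix.of fun i j =>
        (if i = j then p i * q i + u i * q i * p' i else 0) + u i * p i * q' i)
        = P * Λ * P⁻¹ :=
  volumeFilling_normallyElliptic_and_diagonalizable_general u p q q' p' hu hp hq hq' hpp'
end
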